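/- arXiv:2506.13471 — 6 statements merged into one kernel-verified Lean document; each statement's English description precedes it below -/
import Mathlib

section
/- Let w = (w_0, …, w_n) be a tuple of coprime positive integers and let b_w(M) be the number of tuples (e_0, …, e_n) of nonnegative integers with Σ_i w_i e_i = M. If M is divisible by lcm(w_0,…,w_n), then b_w(M) = (1/∏_i w_i)·C(M+n, n) + c·C(M+n-1, n-1) + O_w(M^{n-2}) for some constant c depending only on w. -/
/-!
Let `L = lcm w` and `dᵢ = L / wᵢ`. Writing each exponent as `eᵢ = dᵢ qᵢ + sᵢ` with
`sᵢ ∈ ZMod dᵢ` turns `∑ wᵢ eᵢ = L t` into `∑ qᵢ + j = t`, where `∑ wᵢ sᵢ = L j` must be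
divisible by `L`. Hence `b_w(L t) = ∑ₛ C(t - jₛ + n, n)` over the residue vectors `s` with
`L ∣ ∑ wᵢ sᵢ`; since `jₛ ≤ n` and `C(x + n, n)` vanishes at `x = -1, …, -n`, this is a
polynomial of degree `n` in `M = L t`. Coprimality makes `s ↦ ∑ wᵢ sᵢ` a surjective
homomorphism `∏ ZMod dᵢ → ZMod L`, so its kernel has `∏ dᵢ / L = Lⁿ / ∏ wᵢ` elements and the
top coefficient agrees with that of `C(M + n, n) / ∏ wᵢ`. Choosing `c` to cancel the next
coefficient leaves a polynomial of degree at most `n - 2`.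
-/

open Polynomial Finset
open scoped Nat

namespace WeightedMonomials

noncomputable def binomPoly (k : ℕ) : ℝ[X] := C (k ! : ℝ)⁻¹ * (ascPochhammer ℝ k).comp (X + C 1)

lemma binomPoly_eval_natCast (k N : ℕ) : (binomPoly k).eval (N : ℝ) = (N + k).choose k := by
  have hN : ((N : ℝ) + 1) = ((N + 1 : ℕ) : ℝ) := by push_cast; ring
  rw [binomPoly, eval_mul, eval_C, eval_comp, eval_add, eval_X, eval_C, hN,
    ascPochhammer_nat_eq_natCast_ascFactorial, Nat.ascFactorial_eq_factorial_mul_choose]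
  push_cast
  field_simp

lemma binomPoly_eval_neg {k m : ℕ} (hm : 1 ≤ m) (hmk : m ≤ k) :
    (binomPoly k).eval (-(m : ℝ)) = 0 := by
  have h : -(m : ℝ) + 1 = -((m - 1 : ℕ) : ℝ) := by push_cast [Nat.cast_sub hm]; ring
  simp only [binomPoly, eval_mul, eval_C, eval_comp, eval_add, eval_X]
  rw [h, ascPochhammer_eval_neg_coe_nat_of_lt (by omega), mul_zero]

lemma natDegree_binomPoly (k : ℕ) : (binomPoly k).natDegree = k := by
  rw [binomPoly, natDegree_C_mul (by positivity), natDegree_comp, ascPochhammer_natDegree,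
    natDegree_X_add_C, mul_one]

lemma leadingCoeff_binomPoly (k : ℕ) : (binomPoly k).leadingCoeff = (k ! : ℝ)⁻¹ := by
  have hmonic : ((ascPochhammer ℝ k).comp (X + C 1)).Monic :=
    (monic_ascPochhammer ℝ k).comp (monic_X_add_C 1) (by rw [natDegree_X_add_C]; omega)
  rw [binomPoly, leadingCoeff_mul, leadingCoeff_C, hmonic.leadingCoeff, mul_one]

lemma card_sum_eq (ι : Type*) [Fintype ι] (N : ℕ) :
    Nat.card {q : ι → ℕ // ∑ i, q i = N} = (Fintype.card ι + N - 1).choose N := by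
  classical
  rw [← Nat.card_congr (Sym.equivNatSumOfFintype ι N), Nat.card_eq_fintype_card,
    Sym.card_sym_eq_choose]

lemma card_sum_add_eq_eval (k j t : ℕ) (hj : j ≤ t + k) :
    (Nat.card {q : Fin (k + 1) → ℕ // ∑ i, q i + j = t} : ℝ) =
      (binomPoly k).eval ((t : ℝ) - j) := by
  by_cases hjt : j ≤ t
  · have hsub : ((t : ℝ) - j) = ((t - j : ℕ) : ℝ) := by push_cast [Nat.cast_sub hjt]; ring
    rw [hsub, binomPoly_eval_natCast,
      Nat.card_congr (Equiv.subtypeEquivRight fun q : Fin (k + 1) → ℕ =>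
        (by omega : ∑ i, q i + j = t ↔ ∑ i, q i = t - j)),
      card_sum_eq, Fintype.card_fin, show k + 1 + (t - j) - 1 = t - j + k by omega,
      Nat.choose_symm_add]
  · have hempty : IsEmpty {q : Fin (k + 1) → ℕ // ∑ i, q i + j = t} := ⟨fun q => by omega⟩
    have hneg : ((t : ℝ) - j) = -((j - t : ℕ) : ℝ) := by
      push_cast [Nat.cast_sub (by omega : t ≤ j)]; ring
    rw [Nat.card_of_isEmpty, hneg, binomPoly_eval_neg (by omega) (by omega), Nat.cast_zero]

def modDivEquiv (d : ℕ) [NeZero d] : ℕ ≃ ZMod d × ℕ where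
  toFun a := (a, a / d)
  invFun p := d * p.2 + p.1.val
  left_inv a := by simp only [ZMod.val_natCast, Nat.div_add_mod]
  right_inv p := by
    have hlt : p.1.val < d := ZMod.val_lt p.1
    ext
    · simp
    · simp only [Nat.mul_add_div (NeZero.pos d), Nat.div_eq_of_lt hlt, add_zero]

lemma mul_eq_mul_div_add_val {w d L : ℕ} [NeZero d] (hwd : w * d = L) (e : ℕ) :
    w * e = L * (e / d) + w * (e : ZMod d).val := by
  rw [ZMod.val_natCast, ← hwd]
  conv_lhs => rw [← Nat.div_add_mod e d]
  ring

section Decomposition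

variable {ι : Type*} [Fintype ι] [DecidableEq ι]

lemma finite_mul_sum_add_eq {L : ℕ} (hL : 0 < L) (r M : ℕ) :
    Finite {q : ι → ℕ // L * ∑ i, q i + r = M} := by
  have : Finite {q : ι → ℕ // ∑ i, q i = (M - r) / L} :=
    Finite.of_equiv _ (Sym.equivNatSumOfFintype ι _)
  have hq : ∀ q : ι → ℕ, L * ∑ i, q i + r = M → ∑ i, q i = (M - r) / L := by
    rintro q rfl
    rw [add_tsub_cancel_right, Nat.mul_div_cancel_left _ hL]
  exact Finite.of_injective _
    (Subtype.map_injective (q := fun q : ι → ℕ => ∑ i, q i = (M - r) / L) hq Function.injective_id)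

lemma card_weighted_eq_sum {w d : ι → ℕ} [∀ i, NeZero (d i)] {L : ℕ} (hL : 0 < L)
    (hwd : ∀ i, w i * d i = L) (M : ℕ) :
    Nat.card {e : ι → ℕ // ∑ i, w i * e i = M} =
      ∑ s : (∀ i, ZMod (d i)),
        Nat.card {q : ι → ℕ // L * ∑ i, q i + ∑ i, w i * (s i).val = M} := by
  have := fun r => finite_mul_sum_add_eq (ι := ι) hL r M
  let E : (ι → ℕ) ≃ (∀ i, ZMod (d i)) × (ι → ℕ) :=
    (Equiv.piCongrRight fun i => modDivEquiv (d i)).trans (Equiv.arrowProdEquivProdArrow ι _ _)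
  have hE : ∀ e : ι → ℕ, ∑ i, w i * e i = L * ∑ i, (E e).2 i + ∑ i, w i * ((E e).1 i).val := by
    intro e
    simp only [E, Equiv.trans_apply, Equiv.piCongrRight_apply, Equiv.arrowProdEquivProdArrow_apply,
      modDivEquiv, Equiv.coe_fn_mk, mul_sum, ← sum_add_distrib]
    exact sum_congr rfl fun i _ => mul_eq_mul_div_add_val (hwd i) (e i)
  rw [← Nat.card_sigma]
  exact Nat.card_congr ((E.subtypeEquiv fun e => by rw [hE]).trans
    (Equiv.subtypeProdEquivSigmaSubtype fun (s : ∀ i, ZMod (d i)) (q : ι → ℕ) =>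
      L * ∑ i, q i + ∑ i, w i * (s i).val = M))

end Decomposition

section Residues

variable {ι : Type*} [Fintype ι] {w d : ι → ℕ} {L : ℕ}

def weightedSumHom (hwd : ∀ i, w i * d i = L) : (∀ i, ZMod (d i)) →+ ZMod L :=
  ∑ i, (ZMod.lift (d i) ⟨(AddMonoidHom.mulLeft (w i : ZMod L)).comp (Int.castAddHom (ZMod L)),
    by simp [← Nat.cast_mul, hwd i]⟩).comp (Pi.evalAddMonoidHom _ i)

lemma weightedSumHom_apply [∀ i, NeZero (d i)] (hwd : ∀ i, w i * d i = L)
    (s : ∀ i, ZMod (d i)) :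
    weightedSumHom hwd s = ((∑ i, w i * (s i).val : ℕ) : ZMod L) := by
  simp only [weightedSumHom, AddMonoidHom.finsetSum_apply, AddMonoidHom.comp_apply,
    Pi.evalAddMonoidHom_apply, Nat.cast_sum, Nat.cast_mul]
  refine sum_congr rfl fun i _ => ?_
  conv_lhs => rw [← ZMod.intCast_zmod_cast (s i), ZMod.lift_coe]
  rw [ZMod.cast_eq_val]
  simp only [AddMonoidHom.comp_apply, AddMonoidHom.coe_mulLeft, Int.coe_castAddHom,
    Int.cast_natCast]

lemma weightedSumHom_surjective (hwd : ∀ i, w i * d i = L) (hcop : univ.gcd w = 1) :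
    Function.Surjective (weightedSumHom hwd) := by
  obtain ⟨g, hg⟩ := Finset.gcd_eq_sum_mul univ fun i => (w i : ℤ)
  have hunit : IsUnit (univ.gcd fun i => (w i : ℤ)) := by
    rw [Int.isUnit_iff_natAbs_eq, ← Nat.dvd_one, ← hcop]
    exact Finset.dvd_gcd fun i hi => Int.natAbs_dvd_natAbs.mpr (Finset.gcd_dvd hi)
  obtain ⟨u, hu⟩ := hunit.exists_right_inv
  intro y
  obtain ⟨z, rfl⟩ := ZMod.intCast_surjective y
  refine ⟨fun i => ((g i * u * z : ℤ) : ZMod (d i)), ?_⟩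
  have : ((∑ i, (w i : ℤ) * (g i * u * z) : ℤ) : ZMod L) = z := by
    rw [show ∑ i, (w i : ℤ) * (g i * u * z) = (∑ i, (w i : ℤ) * g i) * u * z by
      simp only [sum_mul, mul_assoc], ← hg, hu, one_mul]
  simp only [weightedSumHom, AddMonoidHom.finsetSum_apply, AddMonoidHom.comp_apply,
    Pi.evalAddMonoidHom_apply, ZMod.lift_coe]
  simpa using this

lemma card_filter_dvd_weightedSum_mul [DecidableEq ι] [∀ i, NeZero (d i)] [NeZero L]
    (hwd : ∀ i, w i * d i = L) (hcop : univ.gcd w = 1) :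
    #(univ.filter fun s : (∀ i, ZMod (d i)) => L ∣ ∑ i, w i * (s i).val) * L = ∏ i, d i := by
  set f := weightedSumHom hwd
  have hker : #(univ.filter fun s : (∀ i, ZMod (d i)) => L ∣ ∑ i, w i * (s i).val) =
      Nat.card f.ker := by
    rw [← Fintype.card_subtype, ← Nat.card_eq_fintype_card]
    exact Nat.card_congr (Equiv.subtypeEquivRight fun s => by
      rw [AddMonoidHom.mem_ker, weightedSumHom_apply, ZMod.natCast_eq_zero_iff])
  have hindex : f.ker.index = L := by
    rw [AddSubgroup.index_ker, AddMonoidHom.range_eq_top.mpr (weightedSumHom_surjective hwd hcop),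
      AddSubgroup.card_top, Nat.card_zmod]
  have h := f.ker.card_mul_index
  rw [hindex, Nat.card_pi] at h
  simpa only [hker, Nat.card_zmod] using h

lemma weightedSum_val_lt [Nonempty ι] [∀ i, NeZero (d i)] (hL : 0 < L)
    (hwd : ∀ i, w i * d i = L) (s : ∀ i, ZMod (d i)) :
    ∑ i, w i * (s i).val < Fintype.card ι * L := by
  rw [← smul_eq_mul, ← Finset.card_univ, ← sum_const]
  refine sum_lt_sum_of_nonempty univ_nonempty fun i _ => ?_
  rw [← hwd i]
  have hw : 0 < w i := Nat.pos_of_ne_zero fun h => by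
    have := hwd i
    rw [h, zero_mul] at this
    omega
  exact Nat.mul_lt_mul_of_pos_left (ZMod.val_lt (s i)) hw

end Residues

lemma card_weighted_mul_eq_sum_eval {k : ℕ} {w d : Fin (k + 1) → ℕ} [∀ i, NeZero (d i)] {L : ℕ}
    (hL : 0 < L) (hwd : ∀ i, w i * d i = L) (t : ℕ) :
    (Nat.card {e : Fin (k + 1) → ℕ // ∑ i, w i * e i = L * t} : ℝ) =
      ∑ s ∈ univ.filter (fun s : ∀ i, ZMod (d i) => L ∣ ∑ i, w i * (s i).val),
        (binomPoly k).eval ((t : ℝ) - ((∑ i, w i * (s i).val) / L : ℕ)) := by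
  rw [card_weighted_eq_sum hL hwd, Nat.cast_sum, sum_filter]
  refine sum_congr rfl fun s _ => ?_
  split_ifs with hdvd
  · obtain ⟨j, hj⟩ := hdvd
    have hjk : j ≤ k := by
      have := weightedSum_val_lt hL hwd s
      rw [hj, Fintype.card_fin, mul_comm L] at this
      exact Nat.lt_succ_iff.mp (Nat.lt_of_mul_lt_mul_right this)
    rw [hj, Nat.mul_div_cancel_left _ hL, ← card_sum_add_eq_eval k j t (by omega)]
    congr 1
    refine Nat.card_congr (Equiv.subtypeEquivRight fun q => ?_)
    rw [← mul_add, Nat.mul_right_inj hL.ne']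
  · have : IsEmpty {q : Fin (k + 1) → ℕ // L * ∑ i, q i + ∑ i, w i * (s i).val = L * t} :=
      ⟨fun q => hdvd ((Nat.dvd_add_right (dvd_mul_right L _)).mp (q.2 ▸ dvd_mul_right L t))⟩
    rw [Nat.card_of_isEmpty, Nat.cast_zero]

theorem exists_poly_eval_eq_card_weighted {k : ℕ} (w : Fin (k + 1) → ℕ) (hw : ∀ i, 0 < w i)
    (hcop : univ.gcd w = 1) :
    ∃ F : ℝ[X], F.natDegree ≤ k ∧ F.coeff k = ((k ! : ℝ) * ∏ i, (w i : ℝ))⁻¹ ∧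
      ∀ M : ℕ, univ.lcm w ∣ M →
        (Nat.card {e : Fin (k + 1) → ℕ // ∑ i, w i * e i = M} : ℝ) = F.eval (M : ℝ) := by
  set L := univ.lcm w
  have hL : 0 < L := Nat.pos_of_ne_zero fun h => by
    obtain ⟨i, -, hi⟩ := Finset.lcm_eq_zero_iff.mp h
    exact (hw i).ne' hi
  have hwd : ∀ i, w i * (L / w i) = L := fun i => Nat.mul_div_cancel' (dvd_lcm (mem_univ i))
  have : ∀ i, NeZero (L / w i) := fun i => ⟨fun h => by
    have := hwd i
    rw [h, mul_zero] at this
    omega⟩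
  set S := univ.filter (fun s : ∀ i, ZMod (L / w i) => L ∣ ∑ i, w i * (s i).val)
  have hS : #S * ∏ i, w i = L ^ k := by
    refine Nat.eq_of_mul_eq_mul_right hL ?_
    have := NeZero.of_pos hL
    rw [mul_right_comm, card_filter_dvd_weightedSum_mul hwd hcop, ← prod_mul_distrib]
    simp only [mul_comm (L / _), hwd, prod_const, card_univ, Fintype.card_fin, pow_succ]
  have hLR : (L : ℝ) ≠ 0 := by exact_mod_cast hL.ne'
  let shift (s : ∀ i, ZMod (L / w i)) : ℝ := ((∑ i, w i * (s i).val) / L : ℕ)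
  refine ⟨∑ s ∈ S, (binomPoly k).comp (C (L : ℝ)⁻¹ * X + C (-shift s)), ?_, ?_, ?_⟩
  · refine natDegree_sum_le_of_forall_le _ _ fun s _ => natDegree_comp_le.trans ?_
    rw [natDegree_binomPoly]
    exact (Nat.mul_le_mul_left k natDegree_linear_le).trans (mul_one k).le
  · have hterm : ∀ s, ((binomPoly k).comp (C (L : ℝ)⁻¹ * X + C (-shift s))).coeff k =
        (k ! : ℝ)⁻¹ * ((L : ℝ)⁻¹) ^ k := fun s => by
      have h1 := natDegree_linear (b := -shift s) (inv_ne_zero hLR)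
      have := coeff_comp_degree_mul_degree (p := binomPoly k) (h1.symm ▸ one_ne_zero)
      rwa [h1, natDegree_binomPoly, mul_one, leadingCoeff_binomPoly,
        leadingCoeff_linear (inv_ne_zero hLR)] at this
    have hSR : (#S : ℝ) * ∏ i, (w i : ℝ) = (L : ℝ) ^ k := by exact_mod_cast hS
    have hS0 : (#S : ℝ) ≠ 0 := fun h => by
      rw [h, zero_mul] at hSR
      exact pow_ne_zero k hLR hSR.symm
    rw [finsetSum_coeff, sum_congr rfl fun s _ => hterm s, sum_const, nsmul_eq_mul, inv_pow,
      ← hSR]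
    field_simp
  · rintro M ⟨t, rfl⟩
    rw [card_weighted_mul_eq_sum_eval hL hwd, eval_finsetSum]
    refine sum_congr rfl fun s _ => ?_
    simp only [eval_comp, eval_add, eval_mul, eval_C, eval_X, shift]
    push_cast
    rw [inv_mul_cancel_left₀ hLR, sub_eq_add_neg]

lemma exists_forall_coeff_sub_C_mul_eq_zero {K : Type*} [Field K] {E Q : K[X]} {k : ℕ}
    (hE : E.natDegree ≤ k) (hEk : E.coeff k = 0) (hQ : Q.natDegree = k - 1) (hQ0 : Q ≠ 0) :
    ∃ c : K, ∀ j, k ≤ j + 1 → (E - C c * Q).coeff j = 0 := by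
  refine ⟨E.coeff (k - 1) / Q.leadingCoeff, fun j hj => ?_⟩
  rw [coeff_sub, coeff_C_mul]
  rcases eq_or_ne j (k - 1) with rfl | hne
  · rw [← hQ, coeff_natDegree, div_mul_cancel₀ _ (leadingCoeff_ne_zero.mpr hQ0), hQ, sub_self]
  · have hQj : Q.coeff j = 0 := coeff_eq_zero_of_natDegree_lt (by omega)
    have hEj : E.coeff j = 0 := by
      rcases (show k ≤ j by omega).eq_or_lt with rfl | hlt
      · exact hEk
      · exact coeff_eq_zero_of_natDegree_lt (by omega)
    rw [hQj, hEj, mul_zero, sub_zero]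

lemma abs_eval_le_mul_rpow {p : ℝ[X]} {a : ℝ} (hp : ∀ j ∈ p.support, (j : ℝ) ≤ a) {x : ℝ}
    (hx : 1 ≤ x) : |p.eval x| ≤ (∑ j ∈ p.support, |p.coeff j|) * x ^ a := by
  rw [eval_eq_sum, Polynomial.sum_def, sum_mul]
  refine (abs_sum_le_sum_abs _ _).trans (sum_le_sum fun j hj => ?_)
  rw [abs_mul, abs_pow, abs_of_nonneg (zero_le_one.trans hx), ← Real.rpow_natCast]
  exact mul_le_mul_of_nonneg_left (Real.rpow_le_rpow_of_exponent_le hx (hp j hj)) (abs_nonneg _)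

theorem exists_abs_sub_binomPoly_le {F : ℝ[X]} {k : ℕ} (hF : F.natDegree ≤ k) :
    ∃ c C : ℝ, ∀ x : ℝ, 1 ≤ x →
      |F.eval x - (k ! * F.coeff k) * (binomPoly k).eval x - c * (binomPoly (k - 1)).eval x|
        ≤ C * x ^ ((k : ℝ) - 2) := by
  set E := F - C ((k ! : ℝ) * F.coeff k) * binomPoly k
  have hE : E.natDegree ≤ k := (max_self k).le.trans' <| natDegree_sub_le_of_le hF
    (natDegree_C_mul_le _ _ |>.trans (natDegree_binomPoly k).le)
  have hEk : E.coeff k = 0 := by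
    have h := coeff_natDegree (p := binomPoly k)
    rw [natDegree_binomPoly, leadingCoeff_binomPoly] at h
    rw [coeff_sub, coeff_C_mul, h, mul_assoc, mul_comm (F.coeff k), ← mul_assoc,
      mul_inv_cancel₀ (by positivity), one_mul, sub_self]
  have hQ0 : binomPoly (k - 1) ≠ 0 :=
    leadingCoeff_ne_zero.mp (by rw [leadingCoeff_binomPoly]; positivity)
  obtain ⟨c, hc⟩ := exists_forall_coeff_sub_C_mul_eq_zero hE hEk (natDegree_binomPoly _) hQ0
  refine ⟨c, ∑ j ∈ (E - C c * binomPoly (k - 1)).support, |(E - C c * binomPoly (k - 1)).coeff j|,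
    fun x hx => ?_⟩
  convert abs_eval_le_mul_rpow (fun j hj => ?_) hx using 2
  · simp [E]
  · by_contra! hlt
    have : (k : ℝ) < j + 2 := by linarith
    exact mem_support_iff.mp hj (hc j (Nat.lt_succ_iff.mp (by exact_mod_cast this)))

end WeightedMonomials

open WeightedMonomials

/-- **Counting weighted monomials** (Lemma 3.10). Let `w = (w_0, …, w_n)` be coprime
positive integers and `b_w(M)` the number of `(e_0,…,e_n) ∈ ℕ^{n+1}` with
`Σ w_i e_i = M`. If `lcm(w) ∣ M` (`M ≥ 1`) then
`b_w(M) = (1/∏ w_i)·C(M+n,n) + c·C(M+n-1,n-1) + O_w(M^{n-2})`. -/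
theorem stmt_1 (n : ℕ) (w : Fin (n + 1) → ℕ) (hw : ∀ i, 0 < w i)
    (hcop : Finset.univ.gcd w = 1) :
    ∃ c C : ℝ, ∀ M : ℕ, 1 ≤ M → Finset.univ.lcm w ∣ M →
      |(Nat.card {e : Fin (n + 1) → ℕ // ∑ i, w i * e i = M} : ℝ)
          - (1 / ∏ i, (w i : ℝ)) * (Nat.choose (M + n) n : ℝ)
          - c * (Nat.choose (M + n - 1) (n - 1) : ℝ)|
        ≤ C * (M : ℝ) ^ ((n : ℝ) - 2) := by
  obtain ⟨F, hdeg, hlead, hF⟩ := exists_poly_eval_eq_card_weighted w hw hcop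
  obtain ⟨c, C, hC⟩ := exists_abs_sub_binomPoly_le hdeg
  refine ⟨c, C, fun M hM hdvd => ?_⟩
  have hlead' : (n ! : ℝ) * F.coeff n = 1 / ∏ i, (w i : ℝ) := by
    rw [hlead, mul_inv, ← mul_assoc, mul_inv_cancel₀ (by positivity), one_mul, one_div]
  have hchoose : M + n - 1 = M + (n - 1) ∨ n - 1 = 0 := by omega
  convert hC M (by exact_mod_cast hM) using 4
  · exact hF M hdvd
  · rw [hlead', binomPoly_eval_natCast]
  · rcases hchoose with h | h
    · rw [h, binomPoly_eval_natCast]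
    · rw [h, Nat.choose_zero_right, binomPoly_eval_natCast, Nat.choose_zero_right]
end

section
/- Let w = (w_0,…,w_n) be coprime positive integers with w_n = 1, and let f ∈ ℤ[X_0,…,X_n] be weighted homogeneous of degree d with weights w (i.e. f(X_0^{w_0},…,X_n^{w_n}) is homogeneous of degree d). Then there exist integers a_0,…,a_{n-1} ∈ {0,…,d} such that |f(a_0,…,a_{n-1},1)| ≥ ‖f‖ / 3^{nd}, where ‖f‖ is the maximum of the absolute values of the coefficients of f. -/
/-!
Since `w_n = 1`, the exponent of `X_n` in a monomial of `f` is determined by the other exponents,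
so setting `X_n = 1` loses no coefficient, and every other exponent is at most `d`. It therefore
suffices to show that a polynomial of degree at most `d` in each of `n` variables takes, for each of
its coefficients `c`, a value of absolute value at least `|c| / 3^{nd}` on `{0,…,d}^n`.
Peeling off one variable at a time reduces this to one variable, where Lagrange interpolation at
`0,…,d` writes each coefficient as a combination of values: the coefficients of the `k`-th basis
polynomial are bounded by `(d+1).choose (k+1)`, and these sum to `2^{d+1} - 1 ≤ 3^d`.
-/

open Finset

namespace Polynomial

variable {R : Type*} [CommRing R] [LinearOrder R] [IsStrictOrderedRing R]

theorem abs_coeff_X_sub_C_mul_le {P : R[X]} {B : R} (hP : ∀ i, |P.coeff i| ≤ B) (c : R)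
    (i : ℕ) : |((X - C c) * P).coeff i| ≤ (1 + |c|) * B := by
  have hX : |(X * P).coeff i| ≤ B := by
    cases i with
    | zero => simpa using (abs_nonneg _).trans (hP 0)
    | succ i => simpa only [coeff_X_mul] using hP i
  calc |((X - C c) * P).coeff i| = |(X * P).coeff i - c * P.coeff i| := by
        rw [sub_mul, coeff_sub, coeff_C_mul]
    _ ≤ |(X * P).coeff i| + |c| * |P.coeff i| := by rw [← abs_mul]; exact abs_sub _ _
    _ ≤ (1 + |c|) * B := by nlinarith [hP i, abs_nonneg c]

theorem abs_coeff_prod_X_sub_C_le {ι : Type*} (s : Finset ι) (c : ι → R) (i : ℕ) :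
    |(∏ j ∈ s, (X - C (c j))).coeff i| ≤ ∏ j ∈ s, (1 + |c j|) := by
  classical
  induction s using Finset.induction_on generalizing i with
  | empty => by_cases hi : i = 0 <;> simp [coeff_one, hi]
  | insert a s ha ih =>
    rw [prod_insert ha, prod_insert ha]
    exact abs_coeff_X_sub_C_mul_le ih (c a) i

end Polynomial

namespace Lagrange

open Polynomial

variable {F : Type*} [Field F] {ι : Type*} [DecidableEq ι]

theorem basis_eq_C_mul_prod_X_sub_C (s : Finset ι) (v : ι → F) (i : ι) :
    Lagrange.basis s v i =
      C (∏ j ∈ s.erase i, (v i - v j)⁻¹) * ∏ j ∈ s.erase i, (X - C (v j)) := by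
  rw [Lagrange.basis, map_prod, ← prod_mul_distrib]
  rfl

theorem abs_coeff_basis_le [LinearOrder F] [IsStrictOrderedRing F] (s : Finset ι) (v : ι → F)
    (i : ι) (k : ℕ) :
    |(Lagrange.basis s v i).coeff k| ≤ ∏ j ∈ s.erase i, (1 + |v j|) / |v i - v j| := by
  rw [basis_eq_C_mul_prod_X_sub_C, coeff_C_mul, abs_mul, abs_prod, prod_div_distrib,
    div_eq_inv_mul, ← prod_inv_distrib]
  simp only [abs_inv]
  exact mul_le_mul_of_nonneg_left (abs_coeff_prod_X_sub_C_le _ _ k)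
    (prod_nonneg fun _ _ => inv_nonneg.2 (abs_nonneg _))

end Lagrange

section Nodes

variable {F : Type*} [Field F] [LinearOrder F] [IsStrictOrderedRing F]

theorem prod_range_erase_one_add_div_abs_sub {d k : ℕ} (hk : k ≤ d) :
    ∏ j ∈ (range (d + 1)).erase k, (1 + (j : F)) / |(k : F) - j| = (d + 1).choose (k + 1) := by
  induction d, hk using Nat.le_induction with
  | base =>
    rw [range_add_one, erase_insert notMem_range_self, Nat.choose_self, Nat.cast_one,
      prod_div_distrib, div_eq_one_iff_eq ?_, ← prod_range_reflect]
    · refine prod_congr rfl fun j hj => ?_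
      have hj := mem_range.1 hj
      rw [show ((k - 1 - j : ℕ) : F) = k - 1 - j by
        rw [Nat.cast_sub (by omega), Nat.cast_sub (by omega), Nat.cast_one]]
      rw [abs_of_pos (sub_pos.2 (by exact_mod_cast hj))]
      ring
    · refine prod_ne_zero_iff.2 fun j hj => abs_ne_zero.2 (sub_ne_zero.2 ?_)
      exact_mod_cast (mem_range.1 hj).ne'
  | succ d hkd ih =>
    rw [range_add_one (n := d + 1), erase_insert_of_ne (by omega),
      prod_insert fun h => by simp at h, ih, abs_sub_comm,
      abs_of_nonneg (by rw [sub_nonneg]; exact_mod_cast (by omega : k ≤ d + 1))]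
    have hchoose := Nat.choose_mul_succ_eq (d + 1) (k + 1)
    rw [show d + 1 + 1 - (k + 1) = d + 1 - k by omega] at hchoose
    have hpos : (0 : F) < (d + 1 : ℕ) - k := by
      rw [sub_pos]; exact_mod_cast (by omega : k < d + 1)
    rw [div_mul_eq_mul_div, div_eq_iff hpos.ne']
    have := congrArg (Nat.cast : ℕ → F) hchoose
    push_cast [Nat.cast_sub (by omega : k ≤ d + 1)] at this ⊢
    linear_combination this

theorem two_pow_succ_le_three_pow_add_one (d : ℕ) : 2 ^ (d + 1) ≤ 3 ^ d + 1 := by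
  induction d with
  | zero => norm_num
  | succ d ih =>
    have := Nat.one_le_pow d 3 (by norm_num)
    rw [pow_succ, pow_succ 3]
    omega

theorem sum_range_choose_succ_le_three_pow (d : ℕ) :
    ∑ k ∈ range (d + 1), ((d + 1).choose (k + 1) : F) ≤ 3 ^ d := by
  have hsum := Nat.sum_range_choose (d + 1)
  rw [sum_range_succ', Nat.choose_zero_right] at hsum
  have := two_pow_succ_le_three_pow_add_one d
  rw [← Nat.cast_sum]
  exact_mod_cast (by omega : ∑ k ∈ range (d + 1), (d + 1).choose (k + 1) ≤ 3 ^ d)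

end Nodes

namespace Polynomial

theorem abs_coeff_le_three_pow_mul {F : Type*} [Field F] [LinearOrder F] [IsStrictOrderedRing F]
    {p : F[X]} {d : ℕ} (hp : p.natDegree ≤ d)
    {M : F} (hM : ∀ k ≤ d, |p.eval (k : F)| ≤ M) (i : ℕ) : |p.coeff i| ≤ 3 ^ d * M := by
  have hinj : Set.InjOn (Nat.cast : ℕ → F) (range (d + 1)) := Nat.cast_injective.injOn
  have hdeg : p.degree < #(range (d + 1)) := by
    rw [card_range]
    exact (degree_le_of_natDegree_le hp).trans_lt (WithBot.coe_lt_coe.2 d.lt_succ_self)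
  have hM0 : 0 ≤ M := (abs_nonneg _).trans (hM 0 d.zero_le)
  have hterm : ∀ k ∈ range (d + 1),
      |(C (p.eval (k : F)) * Lagrange.basis (range (d + 1)) Nat.cast k).coeff i|
        ≤ M * (d + 1).choose (k + 1) := by
    intro k hk
    have hkd := Nat.lt_succ_iff.1 (mem_range.1 hk)
    rw [coeff_C_mul, abs_mul, ← prod_range_erase_one_add_div_abs_sub hkd]
    refine mul_le_mul (hM k hkd) ?_ (abs_nonneg _) hM0
    simpa only [Nat.abs_cast] using
      Lagrange.abs_coeff_basis_le (range (d + 1)) (Nat.cast : ℕ → F) k i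
  rw [Lagrange.eq_interpolate hinj hdeg, Lagrange.interpolate_apply, finsetSum_coeff]
  calc _ ≤ ∑ k ∈ range (d + 1), M * ((d + 1).choose (k + 1) : F) :=
        (abs_sum_le_sum_abs _ _).trans (sum_le_sum hterm)
    _ ≤ 3 ^ d * M := by
        rw [← mul_sum, mul_comm]
        exact mul_le_mul_of_nonneg_right (sum_range_choose_succ_le_three_pow d) hM0

theorem exists_abs_coeff_le_three_pow_mul_abs_eval {p : ℤ[X]} {d : ℕ} (hp : p.natDegree ≤ d)
    (i : ℕ) : ∃ k ≤ d, |p.coeff i| ≤ 3 ^ d * |p.eval (k : ℤ)| := by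
  obtain ⟨k, hk, hmax⟩ := exists_max_image (range (d + 1)) (fun k : ℕ => |p.eval (k : ℤ)|)
    nonempty_range_add_one
  refine ⟨k, Nat.lt_succ_iff.1 (mem_range.1 hk), ?_⟩
  have hbound := abs_coeff_le_three_pow_mul (p := p.map (Int.castRingHom ℚ))
    (natDegree_map_le.trans hp) (M := |((p.eval (k : ℤ) : ℤ) : ℚ)|) (fun j hj => by
      rw [← Int.cast_natCast, eval_intCast_map, eq_intCast, ← Int.cast_abs, ← Int.cast_abs]
      exact_mod_cast hmax j (mem_range.2 (Nat.lt_succ_of_le hj))) i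
  rw [coeff_map, eq_intCast] at hbound
  exact_mod_cast hbound

end Polynomial

namespace Finsupp

variable {M : Type*} [Zero M] {n : ℕ}

noncomputable def init (s : Fin (n + 1) →₀ M) : Fin n →₀ M :=
  Finsupp.equivFunOnFinite.symm (Fin.init s)

@[simp]
theorem init_apply (s : Fin (n + 1) →₀ M) (i : Fin n) : s.init i = s i.castSucc :=
  rfl

end Finsupp

namespace MvPolynomial

theorem exists_abs_coeff_le_three_pow_mul_abs_eval {n d : ℕ} (p : MvPolynomial (Fin n) ℤ)
    (hp : ∀ i, p.degreeOf i ≤ d) (m : Fin n →₀ ℕ) :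
    ∃ a : Fin n → ℤ, (∀ i, 0 ≤ a i ∧ a i ≤ d) ∧
      |p.coeff m| ≤ 3 ^ (n * d) * |eval a p| := by
  induction n with
  | zero =>
    refine ⟨finZeroElim, finZeroElim, ?_⟩
    obtain ⟨c, rfl⟩ := C_surjective (Fin 0) p
    rw [Subsingleton.elim m 0, coeff_zero_C, eval_C, Nat.zero_mul, pow_zero, one_mul]
  | succ n ih =>
    set q := finSuccEquiv ℤ n p
    obtain ⟨b, hb, hq⟩ := ih (q.coeff (m 0))
      (fun i => (degreeOf_coeff_finSuccEquiv p i _).trans (hp i.succ)) m.tail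
    set r := q.map (eval b)
    have hr : r.natDegree ≤ d :=
      Polynomial.natDegree_map_le.trans ((natDegree_finSuccEquiv p).trans_le (hp 0))
    obtain ⟨k, hkd, hk⟩ := Polynomial.exists_abs_coeff_le_three_pow_mul_abs_eval hr (m 0)
    refine ⟨Fin.cons (k : ℤ) b,
      Fin.cases ⟨by simp, by simpa using hkd⟩ (by simpa using hb), ?_⟩
    rw [eval_eq_eval_mv_eval', ← Finsupp.cons_tail m, ← finSuccEquiv_coeff_coeff]
    calc |(q.coeff (m 0)).coeff m.tail| ≤ 3 ^ (n * d) * |r.coeff (m 0)| := by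
          rwa [Polynomial.coeff_map]
      _ ≤ 3 ^ (n * d) * (3 ^ d * |r.eval (k : ℤ)|) := by gcongr
      _ = 3 ^ ((n + 1) * d) * |r.eval (k : ℤ)| := by ring

section Dehomogenize

variable {R : Type*} [CommRing R] {n : ℕ}

noncomputable def dehomogenizeLast :
    MvPolynomial (Fin (n + 1)) R →ₐ[R] MvPolynomial (Fin n) R :=
  aeval (Fin.snoc X 1)

theorem dehomogenizeLast_monomial (m : Fin (n + 1) →₀ ℕ) (c : R) :
    dehomogenizeLast (monomial m c) = monomial m.init c := by
  rw [dehomogenizeLast, aeval_monomial, Finsupp.prod_fintype _ _ (by simp), Fin.prod_univ_castSucc,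
    monomial_eq, Finsupp.prod_fintype _ _ (by simp)]
  simp

theorem eval_dehomogenizeLast (b : Fin n → R) (f : MvPolynomial (Fin (n + 1)) R) :
    eval b (dehomogenizeLast f) = eval (Fin.snoc b 1) f := by
  have hsnoc : (fun i => eval b (Fin.snoc (α := fun _ => MvPolynomial (Fin n) R) X 1 i))
      = Fin.snoc b 1 := by
    funext i
    refine Fin.lastCases ?_ (fun j => ?_) i <;> simp
  rw [dehomogenizeLast, aeval_eq_bind₁, hom_bind₁, coe_eval₂Hom, hsnoc,
    show (eval b).comp C = RingHom.id R from RingHom.ext (eval_C (f := b)), eval₂_id]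

theorem coeff_dehomogenizeLast (μ : Fin n →₀ ℕ) (f : MvPolynomial (Fin (n + 1)) R) :
    (dehomogenizeLast f).coeff μ = ∑ m ∈ f.support with m.init = μ, f.coeff m := by
  conv_lhs => rw [f.as_sum]
  simp only [map_sum, dehomogenizeLast_monomial, coeff_sum, coeff_monomial, sum_filter]

theorem coeff_dehomogenizeLast_init {f : MvPolynomial (Fin (n + 1)) R}
    (hf : Set.InjOn Finsupp.init (f.support : Set (Fin (n + 1) →₀ ℕ)))
    {m : Fin (n + 1) →₀ ℕ} (hm : m ∈ f.support) :
    (dehomogenizeLast f).coeff m.init = f.coeff m := by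
  rw [coeff_dehomogenizeLast, sum_filter,
    sum_eq_single_of_mem m hm fun m' hm' hne => ?_, if_pos rfl]
  exact if_neg fun h => hne (hf hm' hm h)

theorem degreeOf_dehomogenizeLast_le {f : MvPolynomial (Fin (n + 1)) R} {d : ℕ} (i : Fin n)
    (hf : ∀ m ∈ f.support, m i.castSucc ≤ d) : (dehomogenizeLast f).degreeOf i ≤ d := by
  refine degreeOf_le_iff.2 fun μ hμ => ?_
  obtain ⟨m, hm, rfl⟩ : ∃ m ∈ f.support, m.init = μ := by
    by_contra! h
    rw [mem_support_iff, coeff_dehomogenizeLast, sum_eq_zero] at hμ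
    · exact hμ rfl
    · exact fun m hm => absurd (mem_filter.1 hm).2 (h m (mem_filter.1 hm).1)
  exact hf m hm

end Dehomogenize

section WeightedHomogeneous

variable {R : Type*} [CommRing R] {n d : ℕ} {w : Fin (n + 1) → ℕ}
  {f : MvPolynomial (Fin (n + 1)) R}

theorem injOn_init_support_of_sum_mul_eq (hwlast : w (Fin.last n) = 1)
    (hhom : ∀ m ∈ f.support, ∑ i, w i * m i = d) :
    Set.InjOn Finsupp.init (f.support : Set (Fin (n + 1) →₀ ℕ)) := by
  intro m hm m' hm' h
  have hinit (i : Fin n) : m i.castSucc = m' i.castSucc := by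
    simpa using DFunLike.congr_fun h i
  have hsum := (hhom m hm).trans (hhom m' hm').symm
  simp only [Fin.sum_univ_castSucc, hinit, hwlast, one_mul, Nat.add_left_cancel_iff] at hsum
  ext i
  exact Fin.lastCases hsum hinit i

theorem le_of_mem_support_of_sum_mul_eq (hwpos : ∀ i, 0 < w i)
    (hhom : ∀ m ∈ f.support, ∑ i, w i * m i = d) {m : Fin (n + 1) →₀ ℕ}
    (hm : m ∈ f.support) (i : Fin (n + 1)) : m i ≤ d :=
  calc m i ≤ w i * m i := Nat.le_mul_of_pos_left _ (hwpos i)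
    _ ≤ ∑ j, w j * m j := single_le_sum (f := fun j => w j * m j) (fun _ _ => Nat.zero_le _)
        (mem_univ i)
    _ = d := hhom m hm

end WeightedHomogeneous

theorem exists_abs_coeff_le_three_pow_mul_abs_eval_snoc {n d : ℕ} {w : Fin (n + 1) → ℕ}
    (hwpos : ∀ i, 0 < w i) (hwlast : w (Fin.last n) = 1) {f : MvPolynomial (Fin (n + 1)) ℤ}
    (hhom : ∀ m ∈ f.support, ∑ i, w i * m i = d) (m : Fin (n + 1) →₀ ℕ) :
    ∃ b : Fin n → ℤ, (∀ i, 0 ≤ b i ∧ b i ≤ d) ∧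
      |f.coeff m| ≤ 3 ^ (n * d) * |eval (Fin.snoc b 1) f| := by
  obtain ⟨b, hb, hle⟩ := exists_abs_coeff_le_three_pow_mul_abs_eval (dehomogenizeLast f)
    (fun i => degreeOf_dehomogenizeLast_le i fun m hm =>
      le_of_mem_support_of_sum_mul_eq hwpos hhom hm _) m.init
  refine ⟨b, hb, ?_⟩
  rw [← eval_dehomogenizeLast]
  by_cases hm : m ∈ f.support
  · rwa [← coeff_dehomogenizeLast_init (injOn_init_support_of_sum_mul_eq hwlast hhom) hm]
  · rw [notMem_support_iff.1 hm, abs_zero]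
    positivity

end MvPolynomial

open MvPolynomial

theorem stmt_2_general (n d : ℕ) (w : Fin (n + 1) → ℕ) (hwpos : ∀ i, 0 < w i)
    (hwlast : w (Fin.last n) = 1)
    (f : MvPolynomial (Fin (n + 1)) ℤ)
    (hhom : ∀ m ∈ f.support, ∑ i, w i * m i = d) :
    ∃ a : Fin (n + 1) → ℤ, a (Fin.last n) = 1 ∧
      (∀ i : Fin n, 0 ≤ a i.castSucc ∧ a i.castSucc ≤ (d : ℤ)) ∧
      ((f.support.sup fun m => (f.coeff m).natAbs : ℕ) : ℝ) / 3 ^ (n * d)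
        ≤ |((MvPolynomial.eval a f : ℤ) : ℝ)| := by
  obtain ⟨m, hmax⟩ :
      ∃ m, f.support.sup (fun m => (f.coeff m).natAbs) = (f.coeff m).natAbs := by
    rcases f.support.eq_empty_or_nonempty with hf | hf
    · exact ⟨0, by simp [support_eq_empty.1 hf]⟩
    · obtain ⟨m, -, hm⟩ := exists_mem_eq_sup _ hf fun m => (f.coeff m).natAbs
      exact ⟨m, hm⟩
  obtain ⟨b, hb, hle⟩ := exists_abs_coeff_le_three_pow_mul_abs_eval_snoc hwpos hwlast hhom m
  refine ⟨Fin.snoc b 1, Fin.snoc_last _ _, fun i => by simpa using hb i, ?_⟩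
  rw [hmax, div_le_iff₀ (by positivity), Nat.cast_natAbs, Int.cast_abs, mul_comm]
  exact_mod_cast hle

/-- **A large value of a weighted homogeneous polynomial at a small integer point**
(Lemma 3.6). Let `w` be coprime positive weights with `w_n = 1` and `f ∈ ℤ[X_0,…,X_n]`
weighted homogeneous of degree `d` with weights `w`. Then there are
`a_0,…,a_{n-1} ∈ {0,…,d}` with `|f(a_0,…,a_{n-1},1)| ≥ ‖f‖/3^{nd}`. -/
theorem stmt_2 (n d : ℕ) (w : Fin (n + 1) → ℕ) (hwpos : ∀ i, 0 < w i)
    (hwcop : Finset.univ.gcd w = 1) (hwlast : w (Fin.last n) = 1)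
    (f : MvPolynomial (Fin (n + 1)) ℤ)
    (hhom : ∀ m ∈ f.support, ∑ i, w i * m i = d) :
    ∃ a : Fin (n + 1) → ℤ, a (Fin.last n) = 1 ∧
      (∀ i : Fin n, 0 ≤ a i.castSucc ∧ a i.castSucc ≤ (d : ℤ)) ∧
      ((f.support.sup fun m => (f.coeff m).natAbs : ℕ) : ℝ) / 3 ^ (n * d)
        ≤ |((MvPolynomial.eval a f : ℤ) : ℝ)| :=
  stmt_2_general n d w hwpos hwlast f hhom
end

section
/- Let e ≥ 1 and let a_0, w_1, …, w_e be rational numbers with w_e a nonzero integer. Then the number of integers t with |a_0 + w_1 t + … + w_e t^e| ≤ B^e is at most 2eB/|w_e|^{1/e} + e. -/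
/-! Over `ℂ` the polynomial factors as `w_e ∏ (X - α_i)`, so `|p(t)| ≤ B^e = |w_e| r^e` with
`r = B / |w_e|^{1/e}` forces `|t - α_i| ≤ r` for one of the `e` roots. At most `2r + 1` integers lie
within distance `r` of the real part of a given root. -/

open Polynomial

theorem Int.ncard_preimage_Icc_le {a b : ℝ} (hab : a ≤ b) :
    ((((↑) : ℤ → ℝ) ⁻¹' Set.Icc a b).ncard : ℝ) ≤ b - a + 1 := by
  rw [Int.preimage_Icc, ← Finset.coe_Icc, Set.ncard_coe_finset, Int.card_Icc,
    ← Int.cast_natCast, Int.toNat_eq_max, Int.cast_max]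
  refine max_le ?_ (by rw [Int.cast_zero]; linarith)
  push_cast
  linarith [Int.floor_le b, Int.le_ceil a]

theorem Int.ncard_le_of_forall_exists_norm_sub_le {S : Set ℤ} (s : Finset ℂ) {r : ℝ} (hr : 0 ≤ r)
    (hS : ∀ t ∈ S, ∃ α ∈ s, ‖(t : ℂ) - α‖ ≤ r) :
    (S.ncard : ℝ) ≤ s.card * (2 * r + 1) := by
  set I : ℂ → Set ℤ := fun α ↦ ((↑) : ℤ → ℝ) ⁻¹' Set.Icc (α.re - r) (α.re + r)
  have hSI : S ⊆ ⋃ α ∈ s, I α := by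
    intro t ht
    obtain ⟨α, hα, hle⟩ := hS t ht
    have : |(t : ℝ) - α.re| ≤ r := by
      simpa using (Complex.abs_re_le_norm ((t : ℂ) - α)).trans hle
    refine Set.mem_biUnion hα (Set.mem_Icc.mpr ⟨?_, ?_⟩) <;> linarith [abs_le.mp this]
  have hI_finite : (⋃ α ∈ s, I α).Finite :=
    s.finite_toSet.biUnion fun α _ ↦ by simp only [I, Int.preimage_Icc]; exact Set.finite_Icc _ _
  calc (S.ncard : ℝ) ≤ (⋃ α ∈ s, I α).ncard := by exact_mod_cast Set.ncard_le_ncard hSI hI_finite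
    _ ≤ ∑ α ∈ s, ((I α).ncard : ℝ) := by exact_mod_cast s.set_ncard_biUnion_le I
    _ ≤ ∑ _α ∈ s, (2 * r + 1) := Finset.sum_le_sum fun α _ ↦
        (Int.ncard_preimage_Icc_le (by linarith)).trans_eq (by ring)
    _ = s.card * (2 * r + 1) := by rw [Finset.sum_const, nsmul_eq_mul]

theorem Polynomial.Splits.norm_eval_eq {K : Type*} [NormedField K] {q : K[X]} (hq : q.Splits)
    (z : K) : ‖q.eval z‖ = ‖q.leadingCoeff‖ * (q.roots.map fun α ↦ ‖z - α‖).prod := by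
  rw [hq.eval_eq_prod_roots, norm_mul]
  congr 1
  rw [← normHom_apply, map_multiset_prod, Multiset.map_map]
  rfl

theorem Polynomial.Splits.exists_mem_roots_norm_sub_le {K : Type*} [NormedField K] {q : K[X]}
    (hq : q.Splits) (hdeg : 0 < q.natDegree) {z : K} {r : ℝ} (hr : 0 < r)
    (h : ‖q.eval z‖ ≤ ‖q.leadingCoeff‖ * r ^ q.natDegree) : ∃ α ∈ q.roots, ‖z - α‖ ≤ r := by
  by_contra! hfar
  have hroots : q.roots ≠ 0 := by
    rw [← Multiset.card_pos, ← hq.natDegree_eq_card_roots]; exact hdeg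
  have hlead : 0 < ‖q.leadingCoeff‖ := by
    simpa using ne_zero_of_natDegree_gt hdeg
  have hprod : r ^ q.natDegree < (q.roots.map fun α ↦ ‖z - α‖).prod := by
    simpa [← hq.natDegree_eq_card_roots] using
      Multiset.prod_map_lt_prod_map hroots (fun _ ↦ r) _ (fun _ _ ↦ hr) hfar
  rw [hq.norm_eval_eq] at h
  exact (mul_lt_mul_of_pos_left hprod hlead).not_ge h

theorem Polynomial.ncard_setOf_norm_eval_intCast_le (q : ℂ[X]) (hdeg : 0 < q.natDegree)
    {r : ℝ} (hr : 0 < r) :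
    ({t : ℤ | ‖q.eval (t : ℂ)‖ ≤ ‖q.leadingCoeff‖ * r ^ q.natDegree}.ncard : ℝ) ≤
      q.natDegree * (2 * r + 1) := by
  have hq : q.Splits := IsAlgClosed.splits q
  calc _ ≤ (q.roots.toFinset.card : ℝ) * (2 * r + 1) :=
        Int.ncard_le_of_forall_exists_norm_sub_le _ hr.le fun t ht ↦ by
          simpa using hq.exists_mem_roots_norm_sub_le hdeg hr ht
    _ ≤ q.natDegree * (2 * r + 1) := by
        gcongr
        exact_mod_cast q.roots.toFinset_card_le.trans (card_roots' q)

/-- **Counting integers where a degree-`e` polynomial is small**. Let `e ≥ 1`,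
let `p = a_0 + w_1 t + … + w_e t^e ∈ ℚ[t]` with leading coefficient `w_e` a nonzero
integer. Then the number of integers `t` with `|p(t)| ≤ B^e` is at most
`2eB/|w_e|^{1/e} + e`. -/
theorem stmt_3 (e : ℕ) (he : 1 ≤ e) (p : Polynomial ℚ) (we : ℤ) (hwe : we ≠ 0)
    (hdeg : p.natDegree ≤ e) (hlead : p.coeff e = (we : ℚ))
    (B : ℝ) (hB : 1 ≤ B) :
    (Nat.card {t : ℤ | |((p.eval (t : ℚ) : ℚ) : ℝ)| ≤ B ^ e} : ℝ)
      ≤ 2 * e * B / |(we : ℝ)| ^ ((1 : ℝ) / e) + e := by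
  set q := p.map (algebraMap ℚ ℂ)
  have hp_deg : p.natDegree = e := natDegree_eq_of_le_of_coeff_ne_zero hdeg (by simpa [hlead])
  have hq_deg : q.natDegree = e := by rw [natDegree_map, hp_deg]
  have hq_lead : ‖q.leadingCoeff‖ = |(we : ℝ)| := by
    simp [q, leadingCoeff, hp_deg, hlead]
  have hwe_pos : 0 < |(we : ℝ)| := by positivity
  set X := |(we : ℝ)| ^ ((1 : ℝ) / e) with hX
  have hX_pow : X ^ e = |(we : ℝ)| := by
    rw [hX, one_div, Real.rpow_inv_natCast_pow hwe_pos.le (by omega)]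
  have hX_pos : 0 < X := by positivity
  have hset : {t : ℤ | |((p.eval (t : ℚ) : ℚ) : ℝ)| ≤ B ^ e} =
      {t : ℤ | ‖q.eval (t : ℂ)‖ ≤ ‖q.leadingCoeff‖ * (B / X) ^ q.natDegree} := by
    ext t
    simp only [Set.mem_ofPred_eq, hq_deg, hq_lead, div_pow, hX_pow, q]
    rw [mul_div_cancel₀ _ hwe_pos.ne', ← Complex.norm_ratCast, eval_intCast_map, eq_ratCast]
  rw [Nat.card_coe_set_eq, hset]
  calc _ ≤ (q.natDegree : ℝ) * (2 * (B / X) + 1) :=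
        q.ncard_setOf_norm_eval_intCast_le (by omega) (by positivity)
    _ = _ := by rw [hq_deg]; ring
end

section
/- Let e ≥ 1, let w_1,…,w_e, a_0 be rational numbers, and suppose there exist e+1 distinct integers t_1,…,t_{e+1} such that y_i = a_0 + w_1 t_i + … + w_e t_i^e is an integer with |y_i| ≤ B^e for each i. Then |w_e| ≤ 2(e+1)B^e/e; in particular |w_e|^{1/e} ≤ 2B. -/
/-!
By Lagrange interpolation, `w_e = ∑ i, y_i / ∏_{j ≠ i} (t_i - t_j)`. For distinct integer nodes
each denominator is a nonzero integer, hence at least `1` in absolute value; and since the nodes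
spread over an interval of length at least `e`, each `t_i` is at distance at least `e / 2` from
some other node, so each denominator is also at least `e / 2` in absolute value. Summing the
`e + 1` terms gives `|w_e| ≤ 2 (e + 1) B^e / e` as well as `|w_e| ≤ (e + 1) B^e ≤ (2B)^e`.
-/

open Finset

section IntegerNodes

variable {ι : Type*} {s : Finset ι} {t : ι → ℤ} {i : ι}

theorem exists_mem_card_sub_one_le_two_mul_abs_sub (ht : Set.InjOn t s) (hi : i ∈ s) :
    ∃ j ∈ s, (#s : ℤ) - 1 ≤ 2 * |t i - t j| := by
  obtain ⟨jmax, hjmax, hmax⟩ := s.exists_max_image t ⟨i, hi⟩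
  obtain ⟨jmin, hjmin, hmin⟩ := s.exists_min_image t ⟨i, hi⟩
  have hspread : (#s : ℤ) - 1 ≤ t jmax - t jmin := by
    have hsub : s.image t ⊆ Icc (t jmin) (t jmax) := fun x hx => by
      obtain ⟨j, hj, rfl⟩ := mem_image.mp hx
      exact mem_Icc.mpr ⟨hmin j hj, hmax j hj⟩
    have := card_le_card hsub
    rw [card_image_of_injOn ht, Int.card_Icc] at this
    have := card_pos.mpr ⟨i, hi⟩
    omega
  rcases le_or_gt ((#s : ℤ) - 1) (2 * (t jmax - t i)) with h | h
  · exact ⟨jmax, hjmax, h.trans (by rw [abs_sub_comm]; gcongr; exact le_abs_self _)⟩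
  · exact ⟨jmin, hjmin, by linarith [le_abs_self (t i - t jmin)]⟩

theorem prod_abs_sub_pos [DecidableEq ι] (ht : Set.InjOn t s) (hi : i ∈ s) :
    0 < ∏ j ∈ s.erase i, |t i - t j| :=
  prod_pos fun _ hj => abs_pos.mpr <| sub_ne_zero.mpr fun h =>
    (ne_of_mem_erase hj) (ht (mem_of_mem_erase hj) hi h.symm)

theorem card_sub_one_le_two_mul_prod_abs_sub [DecidableEq ι] (ht : Set.InjOn t s) (hi : i ∈ s) :
    (#s : ℤ) - 1 ≤ 2 * ∏ j ∈ s.erase i, |t i - t j| := by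
  obtain ⟨j, hj, hfar⟩ := exists_mem_card_sub_one_le_two_mul_abs_sub ht hi
  have hpos := prod_abs_sub_pos ht hi
  by_cases hji : j = i
  · subst hji
    simp only [sub_self, abs_zero, mul_zero] at hfar
    omega
  · have hdvd := dvd_prod_of_mem (fun j => |t i - t j|) (mem_erase.mpr ⟨hji, hj⟩)
    linarith [Int.le_of_dvd hpos hdvd]

end IntegerNodes

theorem sum_div_le_card_mul_div {ι : Type*} {s : Finset ι} {f d : ι → ℝ} {M c : ℝ}
    (hM : 0 ≤ M) (hf : ∀ i ∈ s, f i ≤ M) (hc : 0 < c) (hd : ∀ i ∈ s, c ≤ d i) :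
    ∑ i ∈ s, f i / d i ≤ #s * M / c := by
  calc ∑ i ∈ s, f i / d i ≤ ∑ _i ∈ s, M / c :=
        sum_le_sum fun i hi => div_le_div₀ hM (hf i hi) hc (hd i hi)
    _ = #s * M / c := by rw [sum_const, nsmul_eq_mul, mul_div_assoc]

theorem Lagrange.abs_coeff_le_sum_abs_eval_div {F ι : Type*} [Field F] [LinearOrder F]
    [IsStrictOrderedRing F] [DecidableEq ι] {s : Finset ι} {v : ι → F} (hvs : Set.InjOn v s)
    {P : Polynomial F} (hP : P.degree < #s) :
    |P.coeff (#s - 1)| ≤ ∑ i ∈ s, |P.eval (v i)| / ∏ j ∈ s.erase i, |v i - v j| := by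
  rw [Lagrange.coeff_eq_sum hvs hP]
  exact (abs_sum_le_sum_abs _ _).trans_eq (by simp only [abs_div, abs_prod])

/-- **Lagrange interpolation bound on the leading coefficient** (from the proof of
Proposition 4.8). If `p = a_0 + w_1 t + … + w_e t^e ∈ ℚ[t]` takes integer values `y_i`
with `|y_i| ≤ B^e` at `e+1` distinct integers `t_i`, then
`|w_e| ≤ 2(e+1)B^e/e`, and in particular `|w_e|^{1/e} ≤ 2B`. -/
theorem stmt_4 (e : ℕ) (he : 1 ≤ e) (p : Polynomial ℚ) (hdeg : p.natDegree ≤ e)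
    (B : ℝ) (hB : 1 ≤ B) (t : Fin (e + 1) → ℤ) (ht : Function.Injective t)
    (y : Fin (e + 1) → ℤ)
    (hy : ∀ i, (y i : ℚ) = p.eval (t i : ℚ) ∧ |((y i : ℤ) : ℝ)| ≤ B ^ e) :
    |((p.coeff e : ℚ) : ℝ)| ≤ 2 * (e + 1) * B ^ e / e ∧
      |((p.coeff e : ℚ) : ℝ)| ^ ((1 : ℝ) / e) ≤ 2 * B := by
  set d : Fin (e + 1) → ℤ := fun i => ∏ j ∈ univ.erase i, |t i - t j|
  have hw : |((p.coeff e : ℚ) : ℝ)| ≤ ∑ i, |(y i : ℝ)| / d i := by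
    have hdeg_lt : (p.map (Rat.castHom ℝ)).degree < #(univ : Finset (Fin (e + 1))) := by
      rw [Polynomial.degree_map, card_univ, Fintype.card_fin]
      exact (Polynomial.degree_le_of_natDegree_le hdeg).trans_lt (by exact_mod_cast e.lt_succ_self)
    have := Lagrange.abs_coeff_le_sum_abs_eval_div (Int.cast_injective.comp ht).injOn hdeg_lt
    simpa [d, Polynomial.eval_intCast_map, ← (hy _).1] using this
  have hBe : 0 ≤ B ^ e := by positivity
  have hd : ∀ i ∈ univ, (1 : ℝ) ≤ d i := fun i _ => by
    exact_mod_cast prod_abs_sub_pos ht.injOn (mem_univ i)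
  have hd_half : ∀ i ∈ univ, (e : ℝ) / 2 ≤ d i := fun i _ => by
    have := card_sub_one_le_two_mul_prod_abs_sub ht.injOn (mem_univ i)
    rw [card_univ, Fintype.card_fin] at this
    rw [div_le_iff₀ two_pos]
    exact_mod_cast (by push_cast at this; linarith : (e : ℤ) ≤ d i * 2)
  have hy_le : ∀ i ∈ univ, |(y i : ℝ)| ≤ B ^ e := fun i _ => (hy i).2
  have hw_one := hw.trans (sum_div_le_card_mul_div hBe hy_le one_pos hd)
  have hw_half := hw.trans (sum_div_le_card_mul_div hBe hy_le (by positivity) hd_half)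
  simp only [card_univ, Fintype.card_fin, Nat.cast_add, Nat.cast_one, div_one] at hw_one hw_half
  refine ⟨hw_half.trans_eq (by field_simp), ?_⟩
  rw [one_div, Real.rpow_inv_le_iff_of_pos (abs_nonneg _) (by linarith) (by positivity),
    Real.rpow_natCast]
  calc _ ≤ (e + 1) * B ^ e := hw_one
    _ ≤ 2 ^ e * B ^ e := by gcongr; exact_mod_cast Nat.lt_two_pow_self
    _ = (2 * B) ^ e := (mul_pow _ _ _).symm
end

section
/- Let F ∈ ℤ[Y, X_1, X_2] with F = F_top + F_0 where F_top(Y^e, X_1, X_2) is homogeneous of degree de, F_top is monic of degree d in Y, F_top is absolutely irreducible, and F_0(Y^e,X_1,X_2) has total degree < de. Let X = V(F) ⊂ 𝔸^3 and π: 𝔸^3 → 𝔸^2 the projection to (X_1,X_2). If ℓ ⊂ X is a twisted line over ℚ (a subvariety such that π(ℓ) is a line and π|_ℓ is an isomorphism onto π(ℓ)), then there exist rationals a_0, a_1, a_2, v_1, v_2, w_1,…,w_e such that ℓ(ℚ) = {(a_0 + t w_1 + t^2 w_2 + … + t^e w_e, a_1 + t v_1, a_2 + t v_2) : t ∈ ℚ},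 where moreover one can take v_1, v_2 to be coprime integers and then w_e is an integer. -/
/-!
Parametrize the line `π(ℓ)` as `t ↦ (x₁, x₂) = (a₁ + t v₁, a₂ + t v₂)` with `v₁, v₂` coprime
integers; the section `g` then parametrizes `ℓ` by `t ↦ (G, x₁, x₂)` with `G = g(x₁, x₂) ∈ ℚ[t]`,
and `F(G, x₁, x₂) = 0` in `ℚ[t]`. If `deg Pᵢ ≤ wᵢ` and no monomial of `F` has weight `> D`, the
coefficient of `t^D` in `F(P)` is the weight-`D` component of `F` evaluated at the coefficients of
`t^wᵢ` in the `Pᵢ`. For weights `(N, 1, 1)` with `N = deg G > e`, the only monomial of maximal weight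
`dN` is `Y^d`, which would give `lc(G)^d = 0`; so `deg G ≤ e`. For weights `(e, 1, 1)` the
weight-`de` component is `F_top`, so `F_top(w_e, v₁, v₂) = 0` with `w_e` the `t^e`-coefficient of
`G`; as `F_top(Y, v₁, v₂)` is monic of degree `d`, `w_e` is integral over `ℤ`, hence an integer.
-/

open MvPolynomial

theorem Polynomial.coeff_prod_sum_of_natDegree_le {R ι : Type*} [CommSemiring R] (s : Finset ι)
    (f : ι → Polynomial R) (n : ι → ℕ) (h : ∀ i ∈ s, (f i).natDegree ≤ n i) :
    (∏ i ∈ s, f i).coeff (∑ i ∈ s, n i) = ∏ i ∈ s, (f i).coeff (n i) := by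
  classical
  induction s using Finset.induction_on with
  | empty => simp
  | insert j s hj ih =>
    have hs : ∀ i ∈ s, (f i).natDegree ≤ n i := fun i hi => h i (Finset.mem_insert_of_mem hi)
    rw [Finset.prod_insert hj, Finset.sum_insert hj, Finset.prod_insert hj,
      Polynomial.coeff_mul_add_eq_of_natDegree_le (h j (Finset.mem_insert_self j s))
        ((Polynomial.natDegree_prod_le _ _).trans (Finset.sum_le_sum hs)), ih hs]

theorem Polynomial.eval_eq_coeff_zero_add_sum_fin {R : Type*} [CommSemiring R] {p : Polynomial R}
    {n : ℕ} (hp : p.natDegree ≤ n) (t : R) :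
    p.eval t = p.coeff 0 + ∑ i : Fin n, p.coeff (i + 1) * t ^ ((i : ℕ) + 1) := by
  rw [Polynomial.eval_eq_sum_range' (Nat.lt_succ_of_le hp), Finset.sum_range_succ',
    Fin.sum_univ_eq_sum_range (fun i => p.coeff (i + 1) * t ^ (i + 1)), pow_zero, mul_one, add_comm]

theorem MvPolynomial.polynomial_eval_aeval {R S σ : Type*} [CommSemiring R] [CommSemiring S]
    [Algebra R S] (P : σ → Polynomial S) (F : MvPolynomial σ R) (t : S) :
    (aeval P F).eval t = aeval (fun i => (P i).eval t) F := by
  simpa using comp_aeval_apply ((Polynomial.aeval t).restrictScalars R) F (f := P)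

theorem Finsupp.weight_vec_three (a b c : ℕ) (m : Fin 3 →₀ ℕ) :
    Finsupp.weight ![a, b, c] m = a * m 0 + b * m 1 + c * m 2 := by
  simp [Finsupp.weight_eq_sum, Fin.sum_univ_three, mul_comm]

theorem weightedHomogeneousComponent_weight_eq_monomial {R σ : Type*} [CommSemiring R]
    {w : σ → ℕ} {F : MvPolynomial σ R} {m₀ : σ →₀ ℕ}
    (h : ∀ m ∈ F.support, m ≠ m₀ → Finsupp.weight w m < Finsupp.weight w m₀) :
    weightedHomogeneousComponent w (Finsupp.weight w m₀) F = monomial m₀ (coeff m₀ F) := by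
  classical
  ext m
  rw [coeff_weightedHomogeneousComponent, coeff_monomial]
  by_cases hm : m = m₀
  · simp [hm]
  · rw [if_neg (Ne.symm hm), ite_eq_right_iff]
    intro hw
    by_contra hc
    exact (h m (mem_support_iff.mpr hc) hm).ne hw

section WeightedSubstitution

variable {R S σ : Type*} [CommSemiring R] [CommSemiring S] [Algebra R S] [Fintype σ]
  {w : σ → ℕ} {P : σ → Polynomial S}

theorem natDegree_prod_pow_le_weight (hP : ∀ i, (P i).natDegree ≤ w i) (m : σ →₀ ℕ) :
    (∏ i, P i ^ m i).natDegree ≤ Finsupp.weight w m := by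
  rw [Finsupp.weight_eq_sum]
  exact (Polynomial.natDegree_prod_le _ _).trans
    (Finset.sum_le_sum fun i _ => Polynomial.natDegree_pow_le_of_le (m i) (hP i))

theorem coeff_prod_pow_weight (hP : ∀ i, (P i).natDegree ≤ w i) (m : σ →₀ ℕ) :
    (∏ i, P i ^ m i).coeff (Finsupp.weight w m) = ∏ i, (P i).coeff (w i) ^ m i := by
  simp only [Finsupp.weight_eq_sum, smul_eq_mul]
  rw [Polynomial.coeff_prod_sum_of_natDegree_le _ _ _
    fun i _ => Polynomial.natDegree_pow_le_of_le (m i) (hP i)]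
  exact Finset.prod_congr rfl fun i _ => Polynomial.coeff_pow_of_natDegree_le (hP i)

theorem natDegree_aeval_le_of_weight_le (hP : ∀ i, (P i).natDegree ≤ w i) {F : MvPolynomial σ R}
    {D : ℕ} (hF : ∀ m ∈ F.support, Finsupp.weight w m ≤ D) : (aeval P F).natDegree ≤ D := by
  rw [aeval_def, eval₂_eq']
  exact Polynomial.natDegree_sum_le_of_forall_le _ _ fun m hm =>
    (Polynomial.natDegree_C_mul_le _ _).trans ((natDegree_prod_pow_le_weight hP m).trans (hF m hm))

theorem coeff_aeval_eq_aeval_weightedHomogeneousComponent (hP : ∀ i, (P i).natDegree ≤ w i)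
    {F : MvPolynomial σ R} {D : ℕ} (hF : ∀ m ∈ F.support, Finsupp.weight w m ≤ D) :
    (aeval P F).coeff D =
      aeval (fun i => (P i).coeff (w i)) (weightedHomogeneousComponent w D F) := by
  rw [weightedHomogeneousComponent_apply, map_sum, Finset.sum_filter, aeval_def, eval₂_eq',
    Polynomial.finsetSum_coeff]
  refine Finset.sum_congr rfl fun m hm => ?_
  rw [Polynomial.algebraMap_apply, Polynomial.coeff_C_mul]
  split_ifs with hD
  · rw [aeval_monomial, Finsupp.prod_fintype _ _ (fun i => pow_zero _), ← hD,
      coeff_prod_pow_weight hP]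
  · rw [Polynomial.coeff_eq_zero_of_natDegree_lt
      ((natDegree_prod_pow_le_weight hP m).trans_lt (lt_of_le_of_ne (hF m hm) hD)), mul_zero]

theorem coeff_aeval_weight_of_weight_lt (hP : ∀ i, (P i).natDegree ≤ w i)
    {F : MvPolynomial σ R} {m₀ : σ →₀ ℕ}
    (h : ∀ m ∈ F.support, m ≠ m₀ → Finsupp.weight w m < Finsupp.weight w m₀) :
    (aeval P F).coeff (Finsupp.weight w m₀) =
      algebraMap R S (coeff m₀ F) * ∏ i, (P i).coeff (w i) ^ m₀ i := by
  have hF : ∀ m ∈ F.support, Finsupp.weight w m ≤ Finsupp.weight w m₀ := fun m hm =>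
    if hne : m = m₀ then hne ▸ le_rfl else (h m hm hne).le
  rw [coeff_aeval_eq_aeval_weightedHomogeneousComponent hP hF,
    weightedHomogeneousComponent_weight_eq_monomial h, aeval_monomial,
    Finsupp.prod_fintype _ _ fun i => pow_zero _]

end WeightedSubstitution

namespace TwistedLine

theorem lt_of_weight_eq_of_ne_single {d e : ℕ} (he : 1 ≤ e) {m : Fin 3 →₀ ℕ}
    (hm : e * m 0 + m 1 + m 2 = d * e) (hne : m ≠ Finsupp.single 0 d) : m 0 < d := by
  by_contra! hd
  have h0 : m 0 = d := by nlinarith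
  have h12 : m 1 = 0 ∧ m 2 = 0 := by constructor <;> nlinarith
  apply hne
  ext i
  fin_cases i <;> simp [h0, h12.1, h12.2]

section

variable {R : Type*} [CommSemiring R] {d e : ℕ} {Ftop F0 : MvPolynomial (Fin 3) R}

theorem coeff_add_single_eq_one (hmonic : Ftop.coeff (Finsupp.single 0 d) = 1)
    (hF0 : ∀ m ∈ F0.support, e * m 0 + m 1 + m 2 < d * e) :
    (Ftop + F0).coeff (Finsupp.single 0 d) = 1 := by
  have : F0.coeff (Finsupp.single 0 d) = 0 :=
    notMem_support_iff.mp fun hm => by simpa [mul_comm] using hF0 _ hm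
  rw [coeff_add, hmonic, this, add_zero]

theorem weight_lt_weight_single (he : 1 ≤ e)
    (hhom : ∀ m ∈ Ftop.support, e * m 0 + m 1 + m 2 = d * e)
    (hF0 : ∀ m ∈ F0.support, e * m 0 + m 1 + m 2 < d * e) {N : ℕ} (hN : e < N) :
    ∀ m ∈ (Ftop + F0).support, m ≠ Finsupp.single 0 d →
      Finsupp.weight ![N, 1, 1] m < Finsupp.weight ![N, 1, 1] (Finsupp.single 0 d) := by
  intro m hm hne
  rw [Finsupp.weight_single, Finsupp.weight_vec_three, smul_eq_mul, Matrix.cons_val_zero,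
    one_mul, one_mul]
  rcases Finset.mem_union.mp (support_add hm) with hm | hm
  · have h := hhom m hm
    have := lt_of_weight_eq_of_ne_single he h hne
    nlinarith
  · have h := hF0 m hm
    have : m 0 < d := by nlinarith
    nlinarith

theorem weightedHomogeneousComponent_add_eq_left
    (hhom : ∀ m ∈ Ftop.support, e * m 0 + m 1 + m 2 = d * e)
    (hF0 : ∀ m ∈ F0.support, e * m 0 + m 1 + m 2 < d * e) :
    weightedHomogeneousComponent ![e, 1, 1] (d * e) (Ftop + F0) = Ftop := by
  rw [map_add, IsWeightedHomogeneous.weightedHomogeneousComponent_same,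
    weightedHomogeneousComponent_eq_zero', add_zero]
  · intro m hm
    simpa [Finsupp.weight_vec_three] using (hF0 m hm).ne
  · intro m hm
    simpa [Finsupp.weight_vec_three] using hhom m (mem_support_iff.mpr hm)

variable {S : Type*} [CommSemiring S] [Algebra R S] {G x₁ x₂ : Polynomial S}

theorem natDegree_le_of_aeval_eq_zero [NoZeroDivisors S] (he : 1 ≤ e)
    (hhom : ∀ m ∈ Ftop.support, e * m 0 + m 1 + m 2 = d * e)
    (hmonic : Ftop.coeff (Finsupp.single 0 d) = 1)
    (hF0 : ∀ m ∈ F0.support, e * m 0 + m 1 + m 2 < d * e)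
    (h₁ : x₁.natDegree ≤ 1) (h₂ : x₂.natDegree ≤ 1) (h : aeval ![G, x₁, x₂] (Ftop + F0) = 0) :
    G.natDegree ≤ e := by
  by_contra! hN
  have hP : ∀ i, (![G, x₁, x₂] i).natDegree ≤ ![G.natDegree, 1, 1] i := by
    intro i; fin_cases i
    exacts [le_rfl, h₁, h₂]
  have key := coeff_aeval_weight_of_weight_lt hP (weight_lt_weight_single he hhom hF0 hN)
  have hG : G ≠ 0 := by rintro rfl; simp at hN
  rw [h, Polynomial.coeff_zero, coeff_add_single_eq_one hmonic hF0, map_one, one_mul] at key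
  simp only [Finsupp.single_apply, pow_ite, pow_zero, Finset.prod_ite_eq, Finset.mem_univ,
    if_true, Matrix.cons_val_zero, Polynomial.coeff_natDegree] at key
  exact pow_ne_zero d (Polynomial.leadingCoeff_ne_zero.mpr hG) key.symm

theorem aeval_coeff_eq_zero_of_aeval_eq_zero
    (hhom : ∀ m ∈ Ftop.support, e * m 0 + m 1 + m 2 = d * e)
    (hF0 : ∀ m ∈ F0.support, e * m 0 + m 1 + m 2 < d * e)
    (hG : G.natDegree ≤ e) (h₁ : x₁.natDegree ≤ 1) (h₂ : x₂.natDegree ≤ 1)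
    (h : aeval ![G, x₁, x₂] (Ftop + F0) = 0) :
    aeval ![G.coeff e, x₁.coeff 1, x₂.coeff 1] Ftop = 0 := by
  have hP : ∀ i, (![G, x₁, x₂] i).natDegree ≤ ![e, 1, 1] i := by
    intro i; fin_cases i
    exacts [hG, h₁, h₂]
  have hF : ∀ m ∈ (Ftop + F0).support, Finsupp.weight ![e, 1, 1] m ≤ d * e := by
    intro m hm
    rw [Finsupp.weight_vec_three, one_mul, one_mul]
    rcases Finset.mem_union.mp (support_add hm) with hm | hm
    exacts [(hhom m hm).le, (hF0 m hm).le]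
  have key := coeff_aeval_eq_aeval_weightedHomogeneousComponent hP hF
  have hv : (fun i => (![G, x₁, x₂] i).coeff (![e, 1, 1] i)) =
      ![G.coeff e, x₁.coeff 1, x₂.coeff 1] := by
    funext i; fin_cases i <;> rfl
  rw [h, Polynomial.coeff_zero, weightedHomogeneousComponent_add_eq_left hhom hF0, hv] at key
  exact key.symm

end

theorem isIntegral_of_aeval_eq_zero {R A : Type*} [CommRing R] [CommRing A] [Algebra R A]
    {d e : ℕ} {Ftop : MvPolynomial (Fin 3) R} (he : 1 ≤ e)
    (hhom : ∀ m ∈ Ftop.support, e * m 0 + m 1 + m 2 = d * e)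
    (hmonic : Ftop.coeff (Finsupp.single 0 d) = 1) {y : A} (c₁ c₂ : R)
    (h : aeval ![y, algebraMap R A c₁, algebraMap R A c₂] Ftop = 0) : IsIntegral R y := by
  set P := ![Polynomial.X, Polynomial.C c₁, Polynomial.C c₂]
  have hP : ∀ i, (P i).natDegree ≤ ![1, 0, 0] i := by
    intro i; fin_cases i
    exacts [Polynomial.natDegree_X_le, (Polynomial.natDegree_C _).le, (Polynomial.natDegree_C _).le]
  have hlt : ∀ m ∈ Ftop.support, m ≠ Finsupp.single 0 d →
      Finsupp.weight ![1, 0, 0] m < Finsupp.weight ![1, 0, 0] (Finsupp.single 0 d) := by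
    intro m hm hne
    simpa [Finsupp.weight_vec_three] using lt_of_weight_eq_of_ne_single he (hhom m hm) hne
  have hmonic' : (aeval P Ftop).Monic := by
    refine Polynomial.monic_of_natDegree_le_of_coeff_eq_one d ?_ ?_
    · refine natDegree_aeval_le_of_weight_le hP fun m hm => ?_
      have := hhom m hm
      simpa [Finsupp.weight_vec_three] using (show m 0 ≤ d by nlinarith)
    · have := coeff_aeval_weight_of_weight_lt hP hlt
      rw [Fin.prod_univ_three] at this
      simpa [P, hmonic, Finsupp.weight_vec_three] using this
  have hv : (fun i => Polynomial.aeval y (P i)) = ![y, algebraMap R A c₁, algebraMap R A c₂] := by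
    funext i; fin_cases i <;> simp [P]
  refine ⟨aeval P Ftop, hmonic', ?_⟩
  rw [← Polynomial.aeval_def, ← h, comp_aeval_apply, hv]

end TwistedLine

theorem exists_coprime_int_mul_of_ne_zero {r₁ r₂ : ℚ} (h : (r₁, r₂) ≠ (0, 0)) :
    ∃ (l : ℚ) (v₁ v₂ : ℤ), l ≠ 0 ∧ r₁ = l * v₁ ∧ r₂ = l * v₂ ∧ Int.gcd v₁ v₂ = 1 := by
  obtain ⟨k, n₁, n₂, hk, h₁, h₂⟩ : ∃ (k : ℚ) (n₁ n₂ : ℤ), k ≠ 0 ∧ r₁ = k * n₁ ∧ r₂ = k * n₂ := by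
    refine ⟨(r₁.den * r₂.den : ℚ)⁻¹, r₁.num * r₂.den, r₂.num * r₁.den, by positivity, ?_, ?_⟩
    · push_cast
      field_simp
      linear_combination Rat.mul_den_eq_num r₁
    · push_cast
      field_simp
      linear_combination Rat.mul_den_eq_num r₂
  have hn : 0 < Int.gcd n₁ n₂ :=
    Int.gcd_pos_iff.mpr (by contrapose! h; simp [h₁, h₂, h.1, h.2])
  obtain ⟨g, v₁, v₂, hg, hv, rfl, rfl⟩ := Int.exists_gcd_one' hn
  exact ⟨k * g, v₁, v₂, by positivity, by rw [h₁]; push_cast; ring, by rw [h₂]; push_cast; ring, hv⟩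

theorem exists_coprime_parametrization_of_line {a b : ℚ} (hab : (a, b) ≠ (0, 0)) (c : ℚ) :
    ∃ (a₁ a₂ : ℚ) (v₁ v₂ : ℤ), Int.gcd v₁ v₂ = 1 ∧
      {x : ℚ × ℚ | a * x.1 + b * x.2 = c} = Set.range fun t : ℚ => (a₁ + t * v₁, a₂ + t * v₂) := by
  obtain ⟨l, v₁, v₂, hl, hb, rfl, hv⟩ := exists_coprime_int_mul_of_ne_zero (r₁ := -b) (r₂ := a)
    (by simpa [and_comm] using hab)
  obtain rfl : b = -(l * v₁) := by linarith
  have hN : (v₁ : ℚ) ^ 2 + (v₂ : ℚ) ^ 2 ≠ 0 := by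
    have hv₀ : ¬(v₁ = 0 ∧ v₂ = 0) := by rintro ⟨rfl, rfl⟩; simp at hv
    rcases not_and_or.mp hv₀ with h | h <;> positivity
  -- base point: foot of the perpendicular from the origin; `t`: projection onto `(v₁, v₂)`
  refine ⟨c * v₂ / (l * (v₁ ^ 2 + v₂ ^ 2)), -c * v₁ / (l * (v₁ ^ 2 + v₂ ^ 2)), v₁, v₂, hv, ?_⟩
  ext ⟨x, y⟩
  simp only [Set.mem_ofPred_eq, Set.mem_range, Prod.mk.injEq]
  constructor
  · intro hxy
    refine ⟨(x * v₁ + y * v₂) / (v₁ ^ 2 + v₂ ^ 2), ?_, ?_⟩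
    · field_simp
      linear_combination -v₂ * hxy
    · field_simp
      linear_combination v₁ * hxy
  · rintro ⟨t, rfl, rfl⟩
    field_simp
    ring

theorem eq_range_of_image_snd_eq_range {α β γ : Type*} {ℓ : Set (α × β)} {h : β → α}
    (hh : ∀ p ∈ ℓ, p.1 = h p.2) {φ : γ → β} (hφ : Prod.snd '' ℓ = Set.range φ) :
    ℓ = Set.range fun t => (h (φ t), φ t) := by
  ext p
  constructor
  · intro hp
    obtain ⟨t, ht⟩ : p.2 ∈ Set.range φ := hφ ▸ ⟨p, hp, rfl⟩
    exact ⟨t, show (h (φ t), φ t) = p by rw [ht, ← hh p hp]⟩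
  · rintro ⟨t, rfl⟩
    obtain ⟨q, hq, hqt⟩ : φ t ∈ Prod.snd '' ℓ := hφ ▸ ⟨t, rfl⟩
    show (h (φ t), φ t) ∈ ℓ
    rwa [← hqt, ← hh q hq]

theorem aeval_eq_zero_of_forall_eval {R S σ : Type*} [CommSemiring R] [CommRing S] [IsDomain S]
    [Infinite S] [Algebra R S] {F : MvPolynomial σ R} {P : σ → Polynomial S}
    (h : ∀ t, aeval (fun i => (P i).eval t) F = 0) : aeval P F = 0 :=
  Polynomial.funext fun t => by rw [polynomial_eval_aeval, h, Polynomial.eval_zero]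

theorem exists_polynomial_parametrization {ℓ : Set (ℚ × ℚ × ℚ)}
    (hline : ∃ a b c : ℚ, (a, b) ≠ (0, 0) ∧
      {x : ℚ × ℚ | ∃ p ∈ ℓ, x = (p.2.1, p.2.2)} = {x : ℚ × ℚ | a * x.1 + b * x.2 = c})
    (hsec : ∃ g : MvPolynomial (Fin 2) ℚ, ∀ p ∈ ℓ, p.1 = MvPolynomial.eval ![p.2.1, p.2.2] g) :
    ∃ (a₁ a₂ : ℚ) (v₁ v₂ : ℤ) (G : Polynomial ℚ), Int.gcd v₁ v₂ = 1 ∧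
      ℓ = Set.range fun t => (G.eval t, a₁ + t * v₁, a₂ + t * v₂) := by
  obtain ⟨a, b, c, hab, hproj⟩ := hline
  obtain ⟨g, hg⟩ := hsec
  obtain ⟨a₁, a₂, v₁, v₂, hv, hlin⟩ := exists_coprime_parametrization_of_line hab c
  have hℓ : ℓ = Set.range fun t : ℚ =>
      (eval ![a₁ + t * v₁, a₂ + t * v₂] g, a₁ + t * v₁, a₂ + t * v₂) := by
    refine eq_range_of_image_snd_eq_range (h := fun q : ℚ × ℚ => eval ![q.1, q.2] g)
      (φ := fun t : ℚ => (a₁ + t * v₁, a₂ + t * v₂)) hg ?_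
    rw [← hlin, ← hproj]
    ext x
    simp [eq_comm]
  set P := ![Polynomial.C a₁ + Polynomial.X * Polynomial.C (v₁ : ℚ),
    Polynomial.C a₂ + Polynomial.X * Polynomial.C (v₂ : ℚ)]
  have hG : ∀ t, (aeval P g).eval t = eval ![a₁ + t * v₁, a₂ + t * v₂] g := by
    intro t
    have hvec : (fun i => (P i).eval t) = ![a₁ + t * v₁, a₂ + t * v₂] := by
      funext i; fin_cases i <;> simp [P]
    rw [polynomial_eval_aeval, hvec, aeval_eq_eval]
  exact ⟨a₁, a₂, v₁, v₂, aeval P g, hv, by simpa only [hG] using hℓ⟩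

/-- **Parametrization of twisted lines** (Lemma 4.2). Let `F = F_top + F_0` where
`F_top ∈ ℤ[Y,X_1,X_2]` is weighted homogeneous of degree `de` with weights `(e,1,1)`,
monic of degree `d` in `Y` and absolutely irreducible, and `F_0(Y^e,X)` has degree
`< de`. If `ℓ ⊂ X = V(F) ⊂ 𝔸³` is a twisted line over `ℚ` (i.e. its projection to the
`(X_1,X_2)`-plane is a line and the projection restricted to `ℓ` is an isomorphism onto
this line, with polynomial inverse given by a section `g`), then
`ℓ(ℚ) = {(a_0 + t w_1 + … + t^e w_e, a_1 + t v_1, a_2 + t v_2) : t ∈ ℚ}` where one can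
take `v_1, v_2` coprime integers, and then `w_e` is an integer. -/
theorem stmt_8 (d e : ℕ) (he : 1 ≤ e)
    (Ftop F0 F : MvPolynomial (Fin 3) ℤ)
    (hhom : ∀ m ∈ Ftop.support, e * m 0 + m 1 + m 2 = d * e)
    (hmonic : Ftop.coeff (Finsupp.single 0 d) = 1)
    (hF0 : ∀ m ∈ F0.support, e * m 0 + m 1 + m 2 < d * e)
    (hF : F = Ftop + F0)
    (ℓ : Set (ℚ × ℚ × ℚ))
    (hvan : ∀ p ∈ ℓ, MvPolynomial.aeval ![p.1, p.2.1, p.2.2] F = (0 : ℚ))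
    (hline : ∃ a b c : ℚ, (a, b) ≠ (0, 0) ∧
      {x : ℚ × ℚ | ∃ p ∈ ℓ, x = (p.2.1, p.2.2)} = {x : ℚ × ℚ | a * x.1 + b * x.2 = c})
    (hsec : ∃ g : MvPolynomial (Fin 2) ℚ, ∀ p ∈ ℓ, p.1 = MvPolynomial.eval ![p.2.1, p.2.2] g) :
    ∃ (a0 a1 a2 : ℚ) (v1 v2 we : ℤ) (w : Fin e → ℚ),
      Int.gcd v1 v2 = 1 ∧ w ⟨e - 1, by omega⟩ = (we : ℚ) ∧
      ℓ = {p : ℚ × ℚ × ℚ | ∃ t : ℚ,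
        p = (a0 + ∑ i : Fin e, w i * t ^ ((i : ℕ) + 1),
          a1 + t * (v1 : ℚ), a2 + t * (v2 : ℚ))} := by
  subst hF
  obtain ⟨a₁, a₂, v₁, v₂, G, hv, hℓ⟩ := exists_polynomial_parametrization hline hsec
  set x₁ : Polynomial ℚ := Polynomial.C a₁ + Polynomial.X * Polynomial.C (v₁ : ℚ)
  set x₂ : Polynomial ℚ := Polynomial.C a₂ + Polynomial.X * Polynomial.C (v₂ : ℚ)
  have hx₁ : x₁.natDegree ≤ 1 := by simp only [x₁]; compute_degree
  have hx₂ : x₂.natDegree ≤ 1 := by simp only [x₂]; compute_degree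
  have hsubst : aeval ![G, x₁, x₂] (Ftop + F0) = 0 := by
    refine aeval_eq_zero_of_forall_eval fun t => ?_
    have hvec : (fun i => (![G, x₁, x₂] i).eval t) = ![G.eval t, a₁ + t * v₁, a₂ + t * v₂] := by
      funext i; fin_cases i <;> simp [x₁, x₂]
    rw [hvec]
    exact hvan (G.eval t, a₁ + t * v₁, a₂ + t * v₂) (hℓ ▸ ⟨t, rfl⟩)
  have hdeg := TwistedLine.natDegree_le_of_aeval_eq_zero he hhom hmonic hF0 hx₁ hx₂ hsubst
  have hroot := TwistedLine.aeval_coeff_eq_zero_of_aeval_eq_zero hhom hF0 hdeg hx₁ hx₂ hsubst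
  have hint : IsIntegral ℤ (G.coeff e) :=
    TwistedLine.isIntegral_of_aeval_eq_zero he hhom hmonic v₁ v₂ (by simpa [x₁, x₂] using hroot)
  obtain ⟨we, hwe⟩ := IsIntegrallyClosed.isIntegral_iff.mp hint
  refine ⟨G.coeff 0, a₁, a₂, v₁, v₂, we, fun i => G.coeff (i + 1), hv, ?_, ?_⟩
  · simpa [Nat.sub_add_cancel he] using hwe.symm
  · rw [hℓ]
    ext p
    simp only [Set.mem_range, Set.mem_ofPred_eq, Polynomial.eval_eq_coeff_zero_add_sum_fin hdeg]
    exact exists_congr fun t => eq_comm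
end

section
/- Let ℓ be a twisted line on X = V(F) ⊂ 𝔸^3 (with F as in the twisted-line setting) parametrized as (a_0 + w_1 t + … + w_e t^e, a_1 + t v_1, a_2 + t v_2) with v_1, v_2 coprime integers and w_e ∈ ℤ. Then the number of points of ℓ with coordinates (y,x_1,x_2) ∈ ℤ^3 satisfying |y| ≤ B^e, |x_1| ≤ B, |x_2| ≤ B is at most 2eB / max{|w_e|^{1/e}, |v_1|, |v_2|} + e. -/
/-!
Two integral points of `ℓ` have parameters differing by some `τ ∈ ℚ` with `τ v₁, τ v₂ ∈ ℤ`,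
hence, by Bézout, by an integer. So the integral points in the box inject into the integer
shifts `s` of the parameter `t₀` of one of them, and it suffices to count those shifts.
If the maximum is `|vᵢ|`, the condition `|aᵢ + (t₀ + s) vᵢ| ≤ B` confines `s` to an interval of
length `2B / |vᵢ|`. If it is `W = |w_e|^{1/e}`, write the first coordinate as
`P(t) = w_e ∏ (t - zⱼ)` over its `e` complex roots: `|P(t₀ + s)| ≤ B^e` forces
`|t₀ + s - zⱼ| ≤ B / W` for some `j`, so `s` lies in one of at most `e` intervals of length
`2B / W`.
-/

open Finset

lemma Int.exists_finset_card_le_of_abs_sub_le (x r : ℝ) (hr : 0 ≤ r) :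
    ∃ T : Finset ℤ, (#T : ℝ) ≤ 2 * r + 1 ∧ ∀ s : ℤ, |s - x| ≤ r → s ∈ T := by
  refine ⟨Icc ⌈x - r⌉ ⌊x + r⌋, ?_, fun s hs => ?_⟩
  · have hcard : ((#(Icc ⌈x - r⌉ ⌊x + r⌋) : ℤ) : ℝ) = max ((⌊x + r⌋ : ℝ) + 1 - ⌈x - r⌉) 0 := by
      rw [Int.card_Icc, Int.toNat_eq_max]; push_cast; rfl
    rw [← Int.cast_natCast, hcard]
    refine max_le ?_ (by linarith)
    linarith [Int.floor_le (x + r), Int.le_ceil (x - r)]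
  · rw [abs_sub_le_iff] at hs
    rw [mem_Icc, Int.ceil_le, Int.le_floor]
    constructor <;> linarith

lemma Int.exists_finset_card_le_of_abs_add_mul_le (c v B : ℝ) (hv : v ≠ 0) (hB : 0 ≤ B) :
    ∃ T : Finset ℤ, (#T : ℝ) ≤ 2 * B / |v| + 1 ∧ ∀ s : ℤ, |c + s * v| ≤ B → s ∈ T := by
  obtain ⟨T, hcard, hmem⟩ :=
    Int.exists_finset_card_le_of_abs_sub_le (-c / v) (B / |v|) (by positivity)
  refine ⟨T, by rwa [mul_div_assoc], fun s hs => hmem s ?_⟩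
  have : (s : ℝ) - -c / v = (c + s * v) / v := by field_simp; ring
  rw [this, abs_div]
  gcongr

lemma Rat.exists_int_eq_of_mul_int_of_gcd_eq_one {q : ℚ} {v₁ v₂ n₁ n₂ : ℤ}
    (hcop : Int.gcd v₁ v₂ = 1) (h₁ : q * v₁ = n₁) (h₂ : q * v₂ = n₂) : ∃ s : ℤ, q = s := by
  refine ⟨n₁ * v₁.gcdA v₂ + n₂ * v₁.gcdB v₂, ?_⟩
  have hbezout : ((v₁ * v₁.gcdA v₂ + v₂ * v₁.gcdB v₂ : ℤ) : ℚ) = 1 := by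
    rw [← Int.gcd_eq_gcd_ab, hcop, Nat.cast_one, Int.cast_one]
  push_cast at hbezout ⊢
  rw [← h₁, ← h₂]
  linear_combination -q * hbezout

lemma Nat.card_le_card_of_injective_of_mem {α β : Type*} {f : α → β} (hf : f.Injective)
    {T : Finset β} (hT : ∀ a, f a ∈ T) : Nat.card α ≤ #T := by
  rw [← Nat.card_eq_finsetCard]
  exact Nat.card_le_card_of_injective (fun a => ⟨f a, hT a⟩) fun a b h => hf congr(($h).1)

namespace Polynomial

section

variable {R : Type*} [Semiring R] {e : ℕ} (a : R) (w : Fin e → R)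

lemma coeff_C_add_sum_C_mul_X_pow_succ_self (he : 0 < e) :
    (C a + ∑ i : Fin e, C (w i) * X ^ ((i : ℕ) + 1)).coeff e = w ⟨e - 1, by omega⟩ := by
  simp only [coeff_add, coeff_C, finsetSum_coeff, coeff_C_mul_X_pow]
  rw [if_neg he.ne', zero_add, sum_eq_single ⟨e - 1, by omega⟩]
  · simp only [if_pos (by omega : e = e - 1 + 1)]
  · intro i _ hi
    rw [if_neg]
    exact fun h => hi (Fin.ext (show (i : ℕ) = e - 1 by omega))
  · simp

lemma natDegree_C_add_sum_C_mul_X_pow_succ_le :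
    (C a + ∑ i : Fin e, C (w i) * X ^ ((i : ℕ) + 1)).natDegree ≤ e := by
  refine (natDegree_add_le _ _).trans (max_le (by simp) ?_)
  refine natDegree_sum_le_of_forall_le _ _ fun i _ => (natDegree_C_mul_le _ _).trans ?_
  exact (natDegree_X_pow_le _).trans i.isLt

lemma natDegree_C_add_sum_C_mul_X_pow_succ (he : 0 < e) (hw : w ⟨e - 1, by omega⟩ ≠ 0) :
    (C a + ∑ i : Fin e, C (w i) * X ^ ((i : ℕ) + 1)).natDegree = e :=
  natDegree_eq_of_le_of_coeff_ne_zero (natDegree_C_add_sum_C_mul_X_pow_succ_le a w)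
    (by rwa [coeff_C_add_sum_C_mul_X_pow_succ_self a w he])

lemma leadingCoeff_C_add_sum_C_mul_X_pow_succ (he : 0 < e) (hw : w ⟨e - 1, by omega⟩ ≠ 0) :
    (C a + ∑ i : Fin e, C (w i) * X ^ ((i : ℕ) + 1)).leadingCoeff = w ⟨e - 1, by omega⟩ := by
  rw [leadingCoeff, natDegree_C_add_sum_C_mul_X_pow_succ a w he hw,
    coeff_C_add_sum_C_mul_X_pow_succ_self a w he]

end

lemma exists_mem_roots_norm_sub_le {K : Type*} [NormedField K] {P : Polynomial K}
    (hP : P.Splits) (hdeg : P.natDegree ≠ 0) {x : K} {r : ℝ} (hr : 0 ≤ r)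
    (h : ‖P.eval x‖ ≤ ‖P.leadingCoeff‖ * r ^ P.natDegree) :
    ∃ z ∈ P.roots, ‖x - z‖ ≤ r := by
  have hroots : P.roots ≠ 0 := by
    rwa [← Multiset.card_pos, ← hP.natDegree_eq_card_roots, Nat.pos_iff_ne_zero]
  obtain ⟨z, hz, hmin⟩ := P.roots.exists_min_image (fun z => ‖x - z‖) hroots
  refine ⟨z, hz, ?_⟩
  have hlead : 0 < ‖P.leadingCoeff‖ := by
    rw [norm_pos_iff, Ne, leadingCoeff_eq_zero]
    rintro rfl
    simp at hdeg
  have hprod : ‖x - z‖ ^ P.natDegree ≤ (P.roots.map (fun y => ‖x - y‖)).prod := by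
    have := Multiset.prod_map_le_prod_map₀ (fun _ => ‖x - z‖) (fun y => ‖x - y‖)
      (fun _ _ => norm_nonneg _) hmin
    rwa [Multiset.map_const', Multiset.prod_replicate, ← hP.natDegree_eq_card_roots] at this
  have heval : ‖P.eval x‖ = ‖P.leadingCoeff‖ * (P.roots.map (fun y => ‖x - y‖)).prod := by
    rw [hP.eval_eq_prod_roots, norm_mul]
    exact congrArg _ (Multiset.prod_hom' P.roots (normHom : K →*₀ ℝ) _).symm
  refine le_of_pow_le_pow_left₀ hdeg hr (hprod.trans ?_)
  rw [heval] at h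
  exact le_of_mul_le_mul_left h hlead

lemma exists_finset_card_le_of_norm_eval_add_int_le (P : Polynomial ℂ)
    (hdeg : P.natDegree ≠ 0) (x : ℂ) {r : ℝ} (hr : 0 ≤ r) :
    ∃ T : Finset ℤ, (#T : ℝ) ≤ P.natDegree * (2 * r + 1) ∧
      ∀ s : ℤ, ‖P.eval (x + s)‖ ≤ ‖P.leadingCoeff‖ * r ^ P.natDegree → s ∈ T := by
  choose T hTcard hTmem using fun z : ℂ => Int.exists_finset_card_le_of_abs_sub_le (z - x).re r hr
  refine ⟨P.roots.toFinset.biUnion T, ?_, fun s hs => ?_⟩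
  · have hroots : (#P.roots.toFinset : ℝ) ≤ P.natDegree := by
      exact_mod_cast P.roots.toFinset_card_le.trans P.card_roots'
    calc (#(P.roots.toFinset.biUnion T) : ℝ) ≤ ∑ z ∈ P.roots.toFinset, (#(T z) : ℝ) := by
          exact_mod_cast card_biUnion_le
      _ ≤ #P.roots.toFinset * (2 * r + 1) := by
          simpa only [nsmul_eq_mul] using sum_le_card_nsmul _ _ _ fun z _ => hTcard z
      _ ≤ P.natDegree * (2 * r + 1) := by gcongr
  · obtain ⟨z, hz, hzr⟩ :=
      exists_mem_roots_norm_sub_le (IsAlgClosed.splits P) hdeg hr hs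
    refine mem_biUnion.2 ⟨z, Multiset.mem_toFinset.2 hz, hTmem z s ?_⟩
    calc |(s : ℝ) - (z - x).re| = |(x + s - z).re| := by
          simp only [Complex.sub_re, Complex.add_re, Complex.intCast_re]
          ring_nf
      _ ≤ r := (Complex.abs_re_le_norm _).trans hzr

end Polynomial

section TwistedLine

variable {e : ℕ} (a0 a1 a2 : ℚ) (v1 v2 : ℤ) (w : Fin e → ℚ)

def twistedLine (t : ℚ) : ℚ × ℚ × ℚ :=
  (a0 + ∑ i : Fin e, w i * t ^ ((i : ℕ) + 1), a1 + t * v1, a2 + t * v2)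

def InBox (e : ℕ) (B : ℝ) (p : ℚ × ℚ × ℚ) : Prop :=
  |(p.1 : ℝ)| ≤ B ^ e ∧ |(p.2.1 : ℝ)| ≤ B ∧ |(p.2.2 : ℝ)| ≤ B

lemma exists_finset_card_le_of_abs_polynomial_le (he : 1 ≤ e) (hw : w ⟨e - 1, by omega⟩ ≠ 0)
    (t₀ : ℚ) {B : ℝ} (hB : 0 ≤ B) :
    ∃ T : Finset ℤ, (#T : ℝ) ≤ e * (2 * B / |(w ⟨e - 1, by omega⟩ : ℝ)| ^ ((1 : ℝ) / e) + 1) ∧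
      ∀ s : ℤ, |((a0 + ∑ i : Fin e, w i * (t₀ + s) ^ ((i : ℕ) + 1) : ℚ) : ℝ)| ≤ B ^ e → s ∈ T := by
  set c : ℝ := ((w ⟨e - 1, by omega⟩ : ℚ) : ℝ)
  set W := |c| ^ ((1 : ℝ) / e)
  have hW : W ^ e = |c| := by
    rw [← Real.rpow_natCast, ← Real.rpow_mul (abs_nonneg _), one_div_mul_cancel (by positivity),
      Real.rpow_one]
  have hc : c ≠ 0 := by simpa [c] using hw
  set P : Polynomial ℂ :=
    .C (a0 : ℂ) + ∑ i : Fin e, .C ((w i : ℚ) : ℂ) * .X ^ ((i : ℕ) + 1) with hP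
  have hwC : ((w ⟨e - 1, by omega⟩ : ℚ) : ℂ) ≠ 0 := by exact_mod_cast hw
  have hdeg : P.natDegree = e :=
    Polynomial.natDegree_C_add_sum_C_mul_X_pow_succ (a0 : ℂ) (fun i => (w i : ℂ)) he hwC
  have hlead : ‖P.leadingCoeff‖ = |c| := by
    rw [hP, Polynomial.leadingCoeff_C_add_sum_C_mul_X_pow_succ (a0 : ℂ) (fun i => (w i : ℂ)) he hwC,
      Complex.norm_ratCast]
  obtain ⟨T, hTcard, hT⟩ :=
    P.exists_finset_card_le_of_norm_eval_add_int_le (by omega) (t₀ : ℂ) (r := B / W) (by positivity)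
  refine ⟨T, by rwa [hdeg, ← mul_div_assoc] at hTcard, fun s hs => hT s ?_⟩
  have heval : P.eval ((t₀ : ℂ) + s) =
      ((a0 + ∑ i : Fin e, w i * (t₀ + s) ^ ((i : ℕ) + 1) : ℚ) : ℂ) := by
    simp [hP, Polynomial.eval_finsetSum]
  rwa [heval, hdeg, hlead, Complex.norm_ratCast, div_pow, hW, mul_div_cancel₀ _ (by positivity)]

lemma twistedLine_exists_finset_card_le (he : 1 ≤ e) (hv : v1 ≠ 0 ∨ v2 ≠ 0) (t₀ : ℚ) {B : ℝ}
    (hB : 0 ≤ B) :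
    ∃ T : Finset ℤ, (#T : ℝ) ≤ 2 * e * B /
        max (|(w ⟨e - 1, by omega⟩ : ℝ)| ^ ((1 : ℝ) / e)) (max |(v1 : ℝ)| |(v2 : ℝ)|) + e ∧
      ∀ s : ℤ, InBox e B (twistedLine a0 a1 a2 v1 v2 w (t₀ + s)) → s ∈ T := by
  set W := |(w ⟨e - 1, by omega⟩ : ℝ)| ^ ((1 : ℝ) / e)
  set V := max |(v1 : ℝ)| |(v2 : ℝ)|
  have he₀ : (1 : ℝ) ≤ e := by exact_mod_cast he
  have hV : 1 ≤ V := by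
    rcases hv with h | h
    · exact le_max_of_le_left (by exact_mod_cast Int.one_le_abs h)
    · exact le_max_of_le_right (by exact_mod_cast Int.one_le_abs h)
  rcases le_total W V with hWV | hVW
  · rw [max_eq_right hWV]
    have linear (a : ℚ) (v : ℤ) (hv : |(v : ℝ)| = V) :
        ∃ T : Finset ℤ, (#T : ℝ) ≤ 2 * e * B / V + e ∧
          ∀ s : ℤ, |((a + (t₀ + s) * v : ℚ) : ℝ)| ≤ B → s ∈ T := by
      have hv₀ : (v : ℝ) ≠ 0 := fun h => by rw [h, abs_zero] at hv; linarith
      obtain ⟨T, hTcard, hT⟩ := Int.exists_finset_card_le_of_abs_add_mul_le (a + t₀ * v) v B hv₀ hB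
      refine ⟨T, ?_, fun s hs => hT s (by convert hs using 2; push_cast; ring)⟩
      calc (#T : ℝ) ≤ 2 * B / V + 1 := hv ▸ hTcard
        _ ≤ e * (2 * B / V + 1) := le_mul_of_one_le_left (by positivity) he₀
        _ = _ := by ring
    rcases max_choice |(v1 : ℝ)| |(v2 : ℝ)| with h | h
    · obtain ⟨T, hTcard, hT⟩ := linear a1 v1 h.symm
      exact ⟨T, hTcard, fun s hs => hT s hs.2.1⟩
    · obtain ⟨T, hTcard, hT⟩ := linear a2 v2 h.symm
      exact ⟨T, hTcard, fun s hs => hT s hs.2.2⟩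
  · have hw : w ⟨e - 1, by omega⟩ ≠ 0 := by
      intro h
      have : W = 0 := by
        simp only [W, h, Rat.cast_zero, abs_zero]
        exact Real.zero_rpow (by positivity)
      linarith
    obtain ⟨T, hTcard, hT⟩ := exists_finset_card_le_of_abs_polynomial_le a0 w he hw t₀ hB
    refine ⟨T, ?_, fun s hs => hT s hs.1⟩
    rw [max_eq_left hVW]
    exact hTcard.trans_eq (by ring)

lemma exists_natCard_intPoints_le (hcop : Int.gcd v1 v2 = 1) {ℓ : Set (ℚ × ℚ × ℚ)}
    (hℓ : ℓ ⊆ Set.range (twistedLine a0 a1 a2 v1 v2 w)) (B : ℝ) :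
    ∃ t₀ : ℚ, ∀ T : Finset ℤ, (∀ s : ℤ, InBox e B (twistedLine a0 a1 a2 v1 v2 w (t₀ + s)) → s ∈ T) →
      Nat.card {q : ℤ × ℤ × ℤ // ((q.1 : ℚ), (q.2.1 : ℚ), (q.2.2 : ℚ)) ∈ ℓ ∧
        |(q.1 : ℝ)| ≤ B ^ e ∧ |(q.2.1 : ℝ)| ≤ B ∧ |(q.2.2 : ℝ)| ≤ B} ≤ #T := by
  by_cases hℓ₀ : ∃ q₀ : ℤ × ℤ × ℤ, ((q₀.1 : ℚ), (q₀.2.1 : ℚ), (q₀.2.2 : ℚ)) ∈ ℓ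
  swap
  · refine ⟨0, fun T _ => ?_⟩
    convert Nat.zero_le _
    exact Nat.card_eq_zero.2 (.inl ⟨fun q => hℓ₀ ⟨q.1, q.2.1⟩⟩)
  obtain ⟨q₀, hq₀⟩ := hℓ₀
  obtain ⟨t₀, h₀⟩ := hℓ hq₀
  have hparam (q : ℤ × ℤ × ℤ) (hq : ((q.1 : ℚ), (q.2.1 : ℚ), (q.2.2 : ℚ)) ∈ ℓ) :
      ∃ s : ℤ, twistedLine a0 a1 a2 v1 v2 w (t₀ + s) = ((q.1 : ℚ), (q.2.1 : ℚ), (q.2.2 : ℚ)) := by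
    obtain ⟨t, ht⟩ := hℓ hq
    simp only [twistedLine, Prod.mk.injEq] at h₀ ht
    obtain ⟨s, hs⟩ := Rat.exists_int_eq_of_mul_int_of_gcd_eq_one hcop
      (q := t - t₀) (n₁ := q.2.1 - q₀.2.1) (n₂ := q.2.2 - q₀.2.2)
      (by push_cast; linear_combination ht.2.1 - h₀.2.1)
      (by push_cast; linear_combination ht.2.2 - h₀.2.2)
    exact ⟨s, by rw [← hs, add_sub_cancel, twistedLine, ht.1, ht.2.1, ht.2.2]⟩
  refine ⟨t₀, fun T hT => ?_⟩
  choose f hf using fun q : {q : ℤ × ℤ × ℤ // ((q.1 : ℚ), (q.2.1 : ℚ), (q.2.2 : ℚ)) ∈ ℓ ∧ _} =>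
    hparam q.1 q.2.1
  refine Nat.card_le_card_of_injective_of_mem (f := f) (fun q q' h => ?_) fun q => hT _ ?_
  · have := (hf q).symm.trans (h ▸ hf q')
    simp only [Prod.mk.injEq, Int.cast_inj] at this
    exact Subtype.ext (Prod.ext this.1 (Prod.ext this.2.1 this.2.2))
  · rw [hf q]
    simpa only [InBox, Rat.cast_intCast] using q.2.2

end TwistedLine

theorem stmt_10 (e : ℕ) (he : 1 ≤ e)
    (a0 a1 a2 : ℚ) (v1 v2 we : ℤ) (w : Fin e → ℚ)
    (hcop : Int.gcd v1 v2 = 1) (hwe : w ⟨e - 1, by omega⟩ = (we : ℚ))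
    (ℓ : Set (ℚ × ℚ × ℚ))
    (hℓ : ℓ = {p : ℚ × ℚ × ℚ | ∃ t : ℚ,
      p = (a0 + ∑ i : Fin e, w i * t ^ ((i : ℕ) + 1), a1 + t * (v1 : ℚ), a2 + t * (v2 : ℚ))})
    (B : ℝ) (hB : 1 ≤ B) :
    (Nat.card {q : ℤ × ℤ × ℤ // ((q.1 : ℚ), (q.2.1 : ℚ), (q.2.2 : ℚ)) ∈ ℓ ∧
        |(q.1 : ℝ)| ≤ B ^ e ∧ |(q.2.1 : ℝ)| ≤ B ∧ |(q.2.2 : ℝ)| ≤ B} : ℝ)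
      ≤ 2 * e * B / max (|(we : ℝ)| ^ ((1 : ℝ) / e)) (max |(v1 : ℝ)| |(v2 : ℝ)|) + e := by
  have hℓ : ℓ ⊆ Set.range (twistedLine a0 a1 a2 v1 v2 w) := by
    rw [hℓ]
    exact fun _ ⟨t, ht⟩ => ⟨t, ht.symm⟩
  have hv : v1 ≠ 0 ∨ v2 ≠ 0 := by
    by_contra! h
    simp [h.1, h.2] at hcop
  obtain ⟨t₀, hcount⟩ := exists_natCard_intPoints_le a0 a1 a2 v1 v2 w hcop hℓ B
  obtain ⟨T, hTcard, hT⟩ :=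
    twistedLine_exists_finset_card_le a0 a1 a2 v1 v2 w he hv t₀ (by linarith : 0 ≤ B)
  rw [hwe, Rat.cast_intCast] at hTcard
  exact (Nat.cast_le.2 (hcount T hT)).trans hTcard
end
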